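/- arXiv:2006.14517 — 14 statements merged into one kernel-verified Lean document; each statement's English description precedes it below -/
import Mathlib

section
/- Let V be a real vector space and k ≥ 2 a natural number. If ω₁ and ω₂ are linearly independent alternating k-linear forms on V, then there exists a vector v ∈ V such that the contractions ι_v ω₁ and ι_v ω₂ are linearly independent alternating (k−1)-linear forms. -/
/-!
Suppose every pair of contractions `ι_v ω₁, ι_v ω₂` is dependent, so `ι_v ω₂ = c(v) ι_v ω₁`
whenever `ι_v ω₁ ≠ 0`. Contracting twice and using `ι_w ι_v = -ι_v ι_w` gives `c(v) = c(w)`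
as soon as `ι_w ι_v ω₁ ≠ 0`. Any two `v, w` with `ι_v ω₁, ι_w ω₁ ≠ 0` are linked in this way
through a common `x` with `ι_x ι_v ω₁ ≠ 0 ≠ ι_x ι_w ω₁`, so `c` is a constant `C`. Then
`ι_v (ω₂ - C ω₁)` vanishes off the proper subspace `{v | ι_v ω₁ = 0}`, hence everywhere, so
`ω₂ = C ω₁`.
-/

namespace LinearMap

variable {R M P Q : Type*} [Semiring R] [AddCommMonoid M] [Module R M]
  [AddCommMonoid P] [Module R P] [AddCommMonoid Q] [Module R Q]

theorem exists_apply_ne_zero_and_apply_ne_zero {α : M →ₗ[R] P} {β : M →ₗ[R] Q}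
    (hα : α ≠ 0) (hβ : β ≠ 0) : ∃ x, α x ≠ 0 ∧ β x ≠ 0 := by
  obtain ⟨a, ha⟩ := DFunLike.ne_iff.1 hα
  obtain ⟨b, hb⟩ := DFunLike.ne_iff.1 hβ
  by_cases hβa : β a = 0
  · by_cases hαb : α b = 0
    · exact ⟨a + b, by simpa [hαb] using ha, by simpa [hβa] using hb⟩
    · exact ⟨b, hαb, hb⟩
  · exact ⟨a, ha, hβa⟩

theorem eq_zero_of_apply_eq_zero_of_apply_ne_zero (φ : M →ₗ[R] P) {ψ : M →ₗ[R] Q}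
    (hψ : ψ ≠ 0) (h : ∀ u, ψ u ≠ 0 → φ u = 0) : φ = 0 := by
  obtain ⟨v, hv⟩ := DFunLike.ne_iff.1 hψ
  ext u
  by_cases hu : ψ u = 0
  · have huv : ψ (u + v) ≠ 0 := by simpa [hu] using hv
    simpa [h v hv] using h (u + v) huv
  · exact h u hu

end LinearMap

namespace AlternatingMap

section CommSemiring

variable {R M N : Type*} [CommSemiring R] [AddCommMonoid M] [Module R M]
  [AddCommMonoid N] [Module R N] {n : ℕ}

theorem curryLeft_injective :
    Function.Injective (curryLeft : M [⋀^Fin n.succ]→ₗ[R] N → M →ₗ[R] M [⋀^Fin n]→ₗ[R] N) := by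
  intro f g h
  ext x
  simpa [Matrix.vecCons, Fin.cons_self_tail] using
    AlternatingMap.congr_fun (LinearMap.congr_fun h (x 0)) (Fin.tail x)

@[simp]
theorem curryLeft_eq_zero {f : M [⋀^Fin n.succ]→ₗ[R] N} : f.curryLeft = 0 ↔ f = 0 :=
  curryLeft_injective.eq_iff' curryLeft_zero

theorem curryLeft_curryLeft_anticomm {N : Type*} [AddCommGroup N] [Module R N]
    (f : M [⋀^Fin (n + 2)]→ₗ[R] N) (v w : M) :
    (f.curryLeft v).curryLeft w = -(f.curryLeft w).curryLeft v := by
  have h := f.curryLeft_same (v + w)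
  simp only [map_add, curryLeft_add, LinearMap.add_apply, curryLeft_same, add_zero,
    zero_add] at h
  exact eq_neg_of_add_eq_zero_right h

end CommSemiring

section Field

variable {K M N : Type*} [Field K] [AddCommMonoid M] [Module K M]
  [AddCommGroup N] [Module K N] {n : ℕ}

theorem eq_of_curryLeft_eq_smul (f g : M [⋀^Fin (n + 2)]→ₗ[K] N) {v w : M} {a b : K}
    (hv : g.curryLeft v = a • f.curryLeft v) (hw : g.curryLeft w = b • f.curryLeft w)
    (hvw : (f.curryLeft v).curryLeft w ≠ 0) : a = b := by
  have h : a • (f.curryLeft v).curryLeft w = b • (f.curryLeft v).curryLeft w := by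
    calc a • (f.curryLeft v).curryLeft w = (g.curryLeft v).curryLeft w := by
          rw [hv, curryLeft_smul, LinearMap.smul_apply]
      _ = -(g.curryLeft w).curryLeft v := curryLeft_curryLeft_anticomm g v w
      _ = b • (f.curryLeft v).curryLeft w := by
          rw [hw, curryLeft_smul, LinearMap.smul_apply, curryLeft_curryLeft_anticomm f w v,
            smul_neg, neg_neg]
  exact smul_left_injective K hvw h

theorem exists_eq_smul_of_curryLeft_eq_smul (f g : M [⋀^Fin (n + 2)]→ₗ[K] N) (hf : f ≠ 0)
    (c : M → K) (hc : ∀ v, f.curryLeft v ≠ 0 → g.curryLeft v = c v • f.curryLeft v) :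
    ∃ C : K, g = C • f := by
  have hconst : ∀ v w, f.curryLeft v ≠ 0 → f.curryLeft w ≠ 0 → c v = c w := by
    intro v w hv hw
    obtain ⟨x, hvx, hwx⟩ := LinearMap.exists_apply_ne_zero_and_apply_ne_zero
      (curryLeft_eq_zero.not.2 hv) (curryLeft_eq_zero.not.2 hw)
    have hx : f.curryLeft x ≠ 0 := fun h0 ↦ hvx (by simp [curryLeft_curryLeft_anticomm f v, h0])
    exact (eq_of_curryLeft_eq_smul f g (hc v hv) (hc x hx) hvx).trans
      (eq_of_curryLeft_eq_smul f g (hc w hw) (hc x hx) hwx).symm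
  obtain ⟨v₀, hv₀⟩ := DFunLike.ne_iff.1 (curryLeft_eq_zero.not.2 hf)
  refine ⟨c v₀, curryLeft_injective ?_⟩
  rw [curryLeft_smul, ← sub_eq_zero]
  refine LinearMap.eq_zero_of_apply_eq_zero_of_apply_ne_zero _ (curryLeft_eq_zero.not.2 hf)
    fun u hu ↦ ?_
  simp [hc u hu, hconst u v₀ hu hv₀]

end Field

end AlternatingMap

/-- Let `V` be a real vector space and `k = n + 1 ≥ 2` a natural number.
If `ω₁` and `ω₂` are linearly independent alternating `k`-linear forms on `V`, then there
exists a vector `v ∈ V` such that the contractions `ι_v ω₁` and `ι_v ω₂` (given by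
`AlternatingMap.curryLeft`) are linearly independent alternating `(k-1)`-linear forms. -/
theorem stmt0 (V : Type*) [AddCommGroup V] [Module ℝ V] (n : ℕ) (hn : 2 ≤ n + 1)
    (ω₁ ω₂ : V [⋀^Fin (n + 1)]→ₗ[ℝ] ℝ)
    (h : LinearIndependent ℝ ![ω₁, ω₂]) :
    ∃ v : V, LinearIndependent ℝ ![ω₁.curryLeft v, ω₂.curryLeft v] := by
  obtain ⟨m, rfl⟩ : ∃ m, n = m + 1 := ⟨n - 1, by omega⟩
  by_contra! hdep
  have hc : ∀ v, ∃ c : ℝ, ω₁.curryLeft v ≠ 0 → ω₂.curryLeft v = c • ω₁.curryLeft v := by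
    intro v
    by_cases hv : ω₁.curryLeft v = 0
    · exact ⟨0, fun hv' ↦ (hv' hv).elim⟩
    · obtain ⟨c, hc⟩ := not_forall_not.1 ((LinearIndependent.pair_iff' hv).not.1 (hdep v))
      exact ⟨c, fun _ ↦ hc.symm⟩
  choose c hc using hc
  have hω₁ : ω₁ ≠ 0 := h.ne_zero 0
  obtain ⟨C, hC⟩ := AlternatingMap.exists_eq_smul_of_curryLeft_eq_smul ω₁ ω₂ hω₁ c hc
  exact (LinearIndependent.pair_iff' hω₁).1 h C hC.symm
end

section
/- Let V be a real vector space and n ≥ 1 a natural number. If ω₁ and ω₂ are linearly independent alternating n-linear forms on V, then there exist vectors v₁, …, v_{n−1} ∈ V and u₁, u₂ ∈ V such that ω_i(u_j, v₁, …, v_{n−1}) = δ_{ij} for all i, j ∈ {1, 2}, where δ_{ij} is the Kronecker delta. -/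
/-!
Write `Ω M = (ω₀ M, ω₁ M) ∈ K²`. It suffices to find `v` and `x, y` such that `Ω (x, v)` and
`Ω (y, v)` are linearly independent: inverting the matrix `ωᵢ (w_j, v)` with `w = (x, y)` then
yields the `u_j`. Such a `v` is found by induction on `n`, fixing the first argument `t`. If for
some `t` the curried forms `ωᵢ (t, ·)` still have independent values, recurse; alternation moves
`t` behind the free slot. Otherwise `Ω M` and `Ω N` are parallel whenever `M` and `N` agree in some
slot, and linearity in the first slot forces them to be parallel for all `M, N`, contradicting the
independence of `ω₀` and `ω₁`.
-/

open Fin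

section CommRing

variable {R V N : Type*} [CommRing R] [AddCommGroup V] [Module R V] [AddCommGroup N] [Module R N]

theorem AlternatingMap.map_cons_cons_swap {n : ℕ} (f : V [⋀^Fin (n + 2)]→ₗ[R] N) (x y : V)
    (m : Fin n → V) : f (cons x (cons y m)) = -f (cons y (cons x m)) := by
  rw [← f.map_swap _ (zero_ne_one' (Fin (n + 2)))]
  congr 1
  ext i
  induction i using Fin.cases with
  | zero => simp
  | succ i =>
    induction i using Fin.cases with
    | zero => simp
    | succ i => simp [Equiv.swap_apply_def, Fin.ext_iff]

theorem AlternatingMap.map_cons_add {n : ℕ} (f : V [⋀^Fin (n + 1)]→ₗ[R] N) (x y : V)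
    (m : Fin n → V) : f (cons (x + y) m) = f (cons x m) + f (cons y m) :=
  f.map_vecCons_add m x y

theorem exists_apply_eq_ite_of_isUnit_det {ι : Type*} [Fintype ι] [DecidableEq ι]
    (f : ι → V →ₗ[R] R) (w : ι → V) (h : IsUnit (Matrix.of fun i j => f i (w j)).det) :
    ∃ u : ι → V, ∀ i j, f i (u j) = if i = j then 1 else 0 := by
  set A := Matrix.of fun i j => f i (w j)
  refine ⟨fun j => ∑ k, A⁻¹ k j • w k, fun i j => ?_⟩
  rw [← Matrix.one_apply, ← Matrix.mul_nonsing_inv A h, Matrix.mul_apply]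
  simp [A, mul_comm]

end CommRing

section Field

variable {K V : Type*} [Field K] [AddCommGroup V] [Module K V]

theorem exists_mul_ne_of_linearIndependent {ι : Type*} {ω : Fin 2 → V [⋀^ι]→ₗ[K] K}
    (h : LinearIndependent K ω) : ∃ M N, ω 0 M * ω 1 N ≠ ω 0 N * ω 1 M := by
  obtain ⟨A, hA⟩ := DFunLike.ne_iff.mp (h.ne_zero 0)
  by_contra! hc
  have hrel : ∑ i, ![ω 1 A, -ω 0 A] i • ω i = 0 := by
    ext M
    simp only [sum_univ_two, Matrix.cons_val_zero, Matrix.cons_val_one, Matrix.cons_val_fin_one,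
      AlternatingMap.add_apply, AlternatingMap.smul_apply, smul_eq_mul, neg_mul,
      AlternatingMap.zero_apply]
    linear_combination -hc A M
  exact hA (by simpa using Fintype.linearIndependent_iff.mp h _ hrel 1)

theorem eq_zero_and_eq_zero_of_mul_eq_mul {p q r s x y : K} (hpr : p * s ≠ r * q)
    (hp : x * q = p * y) (hr : x * s = r * y) : x = 0 ∧ y = 0 := by
  have hD : p * s - r * q ≠ 0 := sub_ne_zero_of_ne hpr
  have hx : x * (p * s - r * q) = 0 := by linear_combination p * hr - r * hp
  have hy : y * (p * s - r * q) = 0 := by linear_combination q * hr - s * hp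
  exact ⟨(mul_eq_zero.mp hx).resolve_right hD, (mul_eq_zero.mp hy).resolve_right hD⟩

namespace AlternatingMap

theorem mul_eq_mul_of_forall_cons {n : ℕ} (f g : V [⋀^Fin (n + 2)]→ₗ[K] K)
    (h : ∀ t P Q, f (cons t P) * g (cons t Q) = f (cons t Q) * g (cons t P))
    (M N : Fin (n + 2) → V) : f M * g N = f N * g M := by
  have h_snd : ∀ t x y (P Q : Fin n → V),
      f (cons x (cons t P)) * g (cons y (cons t Q)) =
        f (cons y (cons t Q)) * g (cons x (cons t P)) := by
    intro t x y P Q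
    rw [map_cons_cons_swap f x, map_cons_cons_swap g y, map_cons_cons_swap f y,
      map_cons_cons_swap g x, neg_mul_neg, neg_mul_neg]
    exact h t _ _
  obtain ⟨a, A, rfl⟩ : ∃ a A, M = cons a A := ⟨_, _, (cons_self_tail M).symm⟩
  obtain ⟨b, B, rfl⟩ : ∃ b B, N = cons b B := ⟨_, _, (cons_self_tail N).symm⟩
  by_contra hne
  -- `(f, g) (b, A)` is parallel to both `(f, g) (a, A)` and `(f, g) (b, B)`, hence zero.
  obtain ⟨hbA₀, hbA₁⟩ := eq_zero_and_eq_zero_of_mul_eq_mul hne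
    (by simpa only [cons_self_tail] using h_snd (A 0) b a (tail A) (tail A)) (h b A B)
  obtain ⟨haB₀, haB₁⟩ := eq_zero_and_eq_zero_of_mul_eq_mul hne
    (h a B A) (by simpa only [cons_self_tail] using h_snd (B 0) a b (tail B) (tail B))
  apply hne
  simpa [map_cons_add, hbA₀, hbA₁, haB₀, haB₁] using h (a + b) A B

theorem exists_cons_mul_ne {n : ℕ} (f g : V [⋀^Fin (n + 1)]→ₗ[K] K)
    (h : ∃ M N, f M * g N ≠ f N * g M) :
    ∃ (v : Fin n → V) (x y : V), f (cons x v) * g (cons y v) ≠ f (cons y v) * g (cons x v) := by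
  induction n with
  | zero =>
    obtain ⟨M, N, hMN⟩ := h
    obtain ⟨a, A, rfl⟩ : ∃ a A, M = cons a A := ⟨_, _, (cons_self_tail M).symm⟩
    obtain ⟨b, B, rfl⟩ : ∃ b B, N = cons b B := ⟨_, _, (cons_self_tail N).symm⟩
    exact ⟨A, a, b, Subsingleton.elim A B ▸ hMN⟩
  | succ n ih =>
    obtain ⟨t, P, Q, hPQ⟩ :
        ∃ t P Q, f (cons t P) * g (cons t Q) ≠ f (cons t Q) * g (cons t P) := by
      by_contra! hfg
      obtain ⟨M, N, hMN⟩ := h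
      exact hMN (mul_eq_mul_of_forall_cons f g hfg M N)
    obtain ⟨v, x, y, hxy⟩ := ih (f.curryLeft t) (g.curryLeft t) ⟨P, Q, hPQ⟩
    refine ⟨cons t v, x, y, ?_⟩
    rwa [map_cons_cons_swap f x, map_cons_cons_swap g y, map_cons_cons_swap f y,
      map_cons_cons_swap g x, neg_mul_neg, neg_mul_neg]

end AlternatingMap

end Field

/-- Let `V` be a real vector space and `n + 1 ≥ 1`. If `ω 0` and `ω 1` are
linearly independent alternating `(n+1)`-linear forms on `V`, then there exist vectors
`v 0, …, v (n-1) ∈ V` and `u 0, u 1 ∈ V` such that `ω i (u j, v 0, …, v (n-1)) = δᵢⱼ`. -/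
theorem stmt1 (V : Type*) [AddCommGroup V] [Module ℝ V] (n : ℕ)
    (ω : Fin 2 → (V [⋀^Fin (n + 1)]→ₗ[ℝ] ℝ))
    (h : LinearIndependent ℝ ω) :
    ∃ (v : Fin n → V) (u : Fin 2 → V),
      ∀ i j : Fin 2, ω i (Fin.cons (u j) v) = if i = j then 1 else 0 := by
  obtain ⟨v, x, y, hxy⟩ :=
    AlternatingMap.exists_cons_mul_ne (ω 0) (ω 1) (exists_mul_ne_of_linearIndependent h)
  obtain ⟨u, hu⟩ := exists_apply_eq_ite_of_isUnit_det
    (fun i => (ω i).toMultilinearMap.toLinearMap (cons 0 v) 0) ![x, y] (by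
      rw [isUnit_iff_ne_zero, Matrix.det_fin_two]
      simpa [sub_eq_zero] using hxy)
  exact ⟨v, u, fun i j => by simpa using hu i j⟩
end

section
/- Let n ≥ 1 and let V be a real vector space of dimension 2n. Let ω be a nonzero alternating n-linear form on V, and let K = {v ∈ V : ω(v, w₁, …, w_{n−1}) = 0 for all w₁, …, w_{n−1} ∈ V} be its kernel, which is a linear subspace of V. Assume dim K = n. Then for every linearly independent family w₁, …, wₙ ∈ V, one has ω(w₁, …, wₙ) = 0 if and only if the span of {w₁, …, wₙ} intersects K nontrivially, i.e. span{w₁, …, wₙ} ∩ K ≠ {0}. -/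
/-!
Restricted to `W = span {w₁, …, wₙ}`, the form `ω` is a top-degree form, so it vanishes on `W`
as soon as it vanishes on the basis `w`. If `W ∩ K = 0`, dimension count gives `V = W ⊕ K`;
expanding `ω` multilinearly along this splitting, every term either has all arguments in `W` or
some argument in `K`, so `ω (w) = 0` would force `ω = 0`. Conversely a nonzero `v = ∑ cᵢ wᵢ` in
`W ∩ K` with `cⱼ ≠ 0` gives `cⱼ ω (w) = ω (w₁, …, v, …, wₙ) = 0`.
-/

open Function Submodule

namespace MultilinearMap

variable {R ι M N : Type*} [Semiring R] [AddCommMonoid M] [Module R M]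
  [AddCommMonoid N] [Module R N] [Fintype ι]

theorem eq_zero_of_sup_eq_top (f : MultilinearMap R (fun _ : ι => M) N) {W K : Submodule R M}
    (hWK : W ⊔ K = ⊤) (hW : ∀ s : ι → M, (∀ i, s i ∈ W) → f s = 0)
    (hK : ∀ (g : ι → M) (i : ι), g i ∈ K → f g = 0) : f = 0 := by
  classical
  ext g
  have hdecomp (i : ι) : ∃ s ∈ W, ∃ k ∈ K, s + k = g i :=
    mem_sup.mp (hWK ▸ mem_top)
  choose s hs k hk hg using hdecomp
  rw [zero_apply, ← funext hg, ← Pi.add_def, f.map_add_univ]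
  refine Finset.sum_eq_zero fun t _ => ?_
  by_cases ht : ∃ i, i ∉ t
  · obtain ⟨i, hi⟩ := ht
    exact hK _ i (by rw [Finset.piecewise_eq_of_notMem _ _ _ hi]; exact hk i)
  · rw [Finset.eq_univ_of_forall (not_exists_not.mp ht), Finset.piecewise_univ]
    exact hW s hs

end MultilinearMap

namespace AlternatingMap

section Semiring

variable {R ι M N : Type*} [Semiring R] [AddCommMonoid M] [Module R M]

theorem map_update_sum_smul [AddCommMonoid N] [Module R N] [Fintype ι] [DecidableEq ι]
    (f : M [⋀^ι]→ₗ[R] N) (w : ι → M) (c : ι → R) (j : ι) :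
    f (update w j (∑ i, c i • w i)) = c j • f w := by
  rw [f.map_update_sum, Finset.sum_eq_single j]
  · rw [f.map_update_smul, update_eq_self]
  · intro i _ hij
    rw [f.map_update_smul, f.map_update_self _ hij.symm, smul_zero]
  · exact fun h => absurd (Finset.mem_univ j) h

theorem map_eq_zero_of_span_inf_ne_bot [AddCommMonoid N] [Module R N] [IsCancelMulZero R]
    [Module.IsTorsionFree R N] [Fintype ι] (f : M [⋀^ι]→ₗ[R] N) {K : Submodule R M}
    (hK : ∀ (g : ι → M) (i : ι), g i ∈ K → f g = 0) {w : ι → M}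
    (h : span R (Set.range w) ⊓ K ≠ ⊥) : f w = 0 := by
  classical
  obtain ⟨v, ⟨hvw, hvK⟩, hv0⟩ := exists_mem_ne_zero_of_ne_bot h
  obtain ⟨c, rfl⟩ := (mem_span_range_iff_exists_fun R).mp hvw
  obtain ⟨j, hj⟩ : ∃ j, c j ≠ 0 := by
    by_contra! hc
    simp [hc] at hv0
  have hupdate : c j • f w = 0 := by
    rw [← f.map_update_sum_smul]
    exact hK _ j (by rwa [update_self])
  exact (smul_eq_zero.mp hupdate).resolve_left hj

theorem map_eq_zero_of_forall_cons_eq_zero [AddCommGroup N] [Module R N] {n : ℕ}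
    (f : M [⋀^Fin (n + 1)]→ₗ[R] N) {v : M} (hv : ∀ w : Fin n → M, f (Fin.cons v w) = 0)
    (g : Fin (n + 1) → M) (i : Fin (n + 1)) (hi : g i = v) : f g = 0 := by
  have hcons : g ∘ Equiv.swap 0 i = Fin.cons v (Fin.tail (g ∘ Equiv.swap 0 i)) := by
    conv_lhs => rw [← Fin.cons_self_tail (g ∘ Equiv.swap 0 i)]
    simp [hi]
  rw [f.map_congr_perm g (Equiv.swap 0 i), hcons, hv, smul_zero]

end Semiring

theorem map_eq_zero_of_mem_span {R ι M : Type*} [CommRing R] [AddCommGroup M] [Module R M]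
    [Finite ι] (f : M [⋀^ι]→ₗ[R] R) {w : ι → M} (hw : LinearIndependent R w) (hfw : f w = 0)
    (s : ι → M) (hs : ∀ i, s i ∈ span R (Set.range w)) : f s = 0 := by
  have hrestrict : f.compLinearMap (span R (Set.range w)).subtype = 0 := by
    rw [← map_basis_eq_zero_iff (Module.Basis.span hw), compLinearMap_apply]
    simpa [Module.Basis.span_apply] using hfw
  simpa using congr($hrestrict fun i => ⟨s i, hs i⟩)

end AlternatingMap

/-- Let `V` be a real vector space of dimension `2n` (with `n = m + 1 ≥ 1`),
`ω` a nonzero alternating `n`-linear form on `V`, and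
`K = {v : ∀ w₁ … w_{n-1}, ω (v, w₁, …, w_{n-1}) = 0}` its kernel, assumed of dimension `n`.
Then for every linearly independent family `w₁, …, wₙ` one has `ω (w₁, …, wₙ) = 0` iff
`span {w₁, …, wₙ} ∩ K ≠ {0}`. -/
theorem stmt2 (m : ℕ) (V : Type*) [AddCommGroup V] [Module ℝ V]
    [FiniteDimensional ℝ V] (hdim : Module.finrank ℝ V = 2 * (m + 1))
    (ω : V [⋀^Fin (m + 1)]→ₗ[ℝ] ℝ) (hω : ω ≠ 0)
    (K : Submodule ℝ V)
    (hK : ∀ v : V, v ∈ K ↔ ∀ w : Fin m → V, ω (Fin.cons v w) = 0)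
    (hKdim : Module.finrank ℝ K = m + 1)
    (w : Fin (m + 1) → V) (hw : LinearIndependent ℝ w) :
    ω w = 0 ↔ Submodule.span ℝ (Set.range w) ⊓ K ≠ ⊥ := by
  have hωK (g : Fin (m + 1) → V) (i : Fin (m + 1)) (hi : g i ∈ K) : ω g = 0 :=
    ω.map_eq_zero_of_forall_cons_eq_zero ((hK _).mp hi) g i rfl
  refine ⟨fun hωw hbot => hω ?_, ω.map_eq_zero_of_span_inf_ne_bot hωK⟩
  have hsup : span ℝ (Set.range w) ⊔ K = ⊤ := by
    refine eq_top_of_disjoint _ _ ?_ (disjoint_iff.mpr hbot)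
    rw [finrank_span_eq_card hw, Fintype.card_fin, hKdim, hdim]
    omega
  exact AlternatingMap.coe_multilinearMap_injective <|
    ω.toMultilinearMap.eq_zero_of_sup_eq_top hsup (ω.map_eq_zero_of_mem_span hw hωw) hωK
end

section
/- Let n ≥ 1 and let V be a real vector space of dimension 2n. Let ω be a nonzero alternating n-linear form on V whose kernel K = {v ∈ V : ω(v, w₁, …, w_{n−1}) = 0 for all w₁, …, w_{n−1} ∈ V} has dimension n. Then there exist linear functionals φ₁, …, φₙ : V → ℝ, each vanishing on K, such that ω(v₁, …, vₙ) = det(φᵢ(vⱼ))_{i,j=1,…,n} for all v₁, …, vₙ ∈ V. -/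
/-!
An entry of `ω` lying in `K` kills it (a transposition moves that entry to the front), so `ω`
only sees the projection of its arguments onto a complement `W` of `K`, which has dimension `n`.
On `W`, `ω` is a multiple `c` of the determinant form of a basis, and `c` is absorbed by
scaling one of the coordinate functionals.
-/

open Module

namespace AlternatingMap

section Semiring

variable {R M N : Type*} [Semiring R] [AddCommGroup M] [Module R M] [AddCommGroup N] [Module R N]

theorem map_eq_zero_of_cons_eq_zero {n : ℕ} (f : M [⋀^Fin (n + 1)]→ₗ[R] N) {x : M}
    (hx : ∀ w : Fin n → M, f (Fin.cons x w) = 0) (v : Fin (n + 1) → M) {i : Fin (n + 1)}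
    (hi : v i = x) : f v = 0 := by
  have hswap : f (v ∘ Equiv.swap 0 i) = 0 := by
    rw [← Fin.cons_self_tail (v ∘ Equiv.swap 0 i)]
    simpa [hi] using hx _
  rw [f.map_perm] at hswap
  exact (smul_eq_zero_iff_eq _).1 hswap

theorem map_eq_of_forall_sub_mem {ι : Type*} [Fintype ι] [DecidableEq ι] (f : M [⋀^ι]→ₗ[R] N)
    {K : Submodule R M} (hf : ∀ v i, v i ∈ K → f v = 0) {u v : ι → M}
    (huv : ∀ i, v i - u i ∈ K) : f v = f u := by
  have hsplit : v = u + (v - u) := by abel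
  rw [hsplit, f.map_add_univ, Finset.sum_eq_single Finset.univ]
  · simp
  · intro s _ hs
    obtain ⟨i, hi⟩ : ∃ i, i ∉ s := by simpa [Finset.eq_univ_iff_forall] using hs
    exact hf _ i (by simpa [Finset.piecewise_eq_of_notMem _ _ _ hi] using huv i)
  · simp

end Semiring

variable {R M : Type*} [CommRing R] [AddCommGroup M] [Module R M]
  {ι : Type*} [Fintype ι] [DecidableEq ι] [Nonempty ι]

theorem exists_eq_det_of_basis (e : Basis ι R M) (f : M [⋀^ι]→ₗ[R] R) :
    ∃ φ : ι → Dual R M, ∀ v, f v = (Matrix.of fun i j => φ i (v j)).det := by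
  let i₀ : ι := Classical.arbitrary ι
  refine ⟨Function.update e.coord i₀ (f e • e.coord i₀), fun v => ?_⟩
  have hrows : (Matrix.of fun i j => Function.update e.coord i₀ (f e • e.coord i₀) i (v j)) =
      (e.toMatrix v).updateRow i₀ (f e • e.toMatrix v i₀) := by
    ext i j
    rcases eq_or_ne i i₀ with rfl | hi
    · simp [Basis.toMatrix_apply]
    · simp [Basis.toMatrix_apply, hi]
  rw [hrows, Matrix.det_updateRow_smul, Matrix.updateRow_eq_self, ← Basis.det_apply,
    ← smul_eq_mul, ← smul_apply, ← f.eq_smul_basis_det e]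

theorem exists_eq_det_of_isCompl (f : M [⋀^ι]→ₗ[R] R) {K W : Submodule R M} (hWK : IsCompl W K)
    (e : Basis ι R W) (hf : ∀ v i, v i ∈ K → f v = 0) :
    ∃ φ : ι → Dual R M, (∀ i, ∀ x ∈ K, φ i x = 0) ∧
      ∀ v, f v = (Matrix.of fun i j => φ i (v j)).det := by
  obtain ⟨ψ, hψ⟩ := exists_eq_det_of_basis e (f.compLinearMap W.subtype)
  refine ⟨fun i => ψ i ∘ₗ W.projectionOnto K hWK, fun i x hx => ?_, fun v => ?_⟩
  · simp [(Submodule.projectionOnto_apply_eq_zero_iff hWK).2 hx]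
  · exact (f.map_eq_of_forall_sub_mem hf fun i => Submodule.sub_projection_mem hWK (v i)).trans
      (hψ _)

end AlternatingMap

theorem stmt3_general (m : ℕ) (V : Type*) [AddCommGroup V] [Module ℝ V]
    [FiniteDimensional ℝ V] (hdim : Module.finrank ℝ V = 2 * (m + 1))
    (ω : V [⋀^Fin (m + 1)]→ₗ[ℝ] ℝ)
    (K : Submodule ℝ V)
    (hK : ∀ v : V, v ∈ K ↔ ∀ w : Fin m → V, ω (Fin.cons v w) = 0)
    (hKdim : Module.finrank ℝ K = m + 1) :
    ∃ φ : Fin (m + 1) → (V →ₗ[ℝ] ℝ),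
      (∀ i, ∀ v ∈ K, φ i v = 0) ∧
      ∀ v : Fin (m + 1) → V, ω v = Matrix.det (Matrix.of fun i j => φ i (v j)) := by
  obtain ⟨W, hKW⟩ := K.exists_isCompl
  have hW : finrank ℝ W = m + 1 := by
    have := Submodule.finrank_add_eq_of_isCompl hKW
    omega
  exact ω.exists_eq_det_of_isCompl hKW.symm (finBasisOfFinrankEq ℝ W hW)
    fun v i hi => ω.map_eq_zero_of_cons_eq_zero ((hK _).1 hi) v rfl

/-- Let `V` be a real vector space of dimension `2n` (with `n = m + 1 ≥ 1`)
and `ω` a nonzero alternating `n`-linear form on `V` whose kernel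
`K = {v : ∀ w₁ … w_{n-1}, ω (v, w₁, …, w_{n-1}) = 0}` has dimension `n`. Then there exist
linear functionals `φ₁, …, φₙ : V → ℝ`, each vanishing on `K`, such that
`ω (v₁, …, vₙ) = det (φᵢ (vⱼ))` for all `v₁, …, vₙ ∈ V`. -/
theorem stmt3 (m : ℕ) (V : Type*) [AddCommGroup V] [Module ℝ V]
    [FiniteDimensional ℝ V] (hdim : Module.finrank ℝ V = 2 * (m + 1))
    (ω : V [⋀^Fin (m + 1)]→ₗ[ℝ] ℝ) (hω : ω ≠ 0)
    (K : Submodule ℝ V)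
    (hK : ∀ v : V, v ∈ K ↔ ∀ w : Fin m → V, ω (Fin.cons v w) = 0)
    (hKdim : Module.finrank ℝ K = m + 1) :
    ∃ φ : Fin (m + 1) → (V →ₗ[ℝ] ℝ),
      (∀ i, ∀ v ∈ K, φ i v = 0) ∧
      ∀ v : Fin (m + 1) → V, ω v = Matrix.det (Matrix.of fun i j => φ i (v j)) :=
  stmt3_general m V hdim ω K hK hKdim
end

section
/- Let E be a finite-dimensional real inner product space, ω an alternating n-linear form on E, A : E → E a linear map, and x₀ ∈ ℝ. Let f₁, …, fₙ : ℝ → E be functions, each differentiable at x₀ with derivative fⱼ′(x₀) = A(fⱼ(x₀)), and suppose that (f₁(x₀), …, fₙ(x₀)) is an orthonormal family. Define ψ(x) = ω(f₁(x), …, fₙ(x)) / √(det G(x)), where G(x) is the n×n Gram matrix with entries G(x)ᵢⱼ = ⟨fᵢ(x), fⱼ(x)⟩. Then ψ is differentiable at x₀ with derivative ψ′(x₀) = Σ_{j=1}^{n} ω(f₁(x₀), …, A(fⱼ(x₀)), …, fₙ(x₀)) − ω(f₁(x₀), …, fₙ(x₀)) · Σ_{j=1}^{n} ⟨A(fⱼ(x₀)),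 fⱼ(x₀)⟩, where in the first sum A(fⱼ(x₀)) replaces the j-th argument. -/
open scoped RealInnerProductSpace

/-!
The numerator `ω (f₁, …, fₙ)` is differentiated by the Leibniz rule for multilinear maps. The
Gram matrix is the identity at `x₀`, where the derivative of the determinant is the trace, so
`det G` has derivative `2 ∑ⱼ ⟪A fⱼ, fⱼ⟫` and `√(det G)` has derivative `∑ⱼ ⟪A fⱼ, fⱼ⟫`; the
quotient rule, with `ω (f₁, …, fₙ) / 1` at `x₀`, gives the formula.
-/

section Multilinear

variable {𝕜 : Type*} [NontriviallyNormedField 𝕜] [CompleteSpace 𝕜]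
  {ι : Type*} [Fintype ι] {E : ι → Type*} [∀ i, NormedAddCommGroup (E i)]
  [∀ i, NormedSpace 𝕜 (E i)] [∀ i, FiniteDimensional 𝕜 (E i)]
  {F : Type*} [NormedAddCommGroup F] [NormedSpace 𝕜 F]

theorem MultilinearMap.continuous_of_finiteDimensional (m : MultilinearMap 𝕜 E F) :
    Continuous m := by
  classical
  -- expanding every argument in a basis writes `m` as a polynomial in the coordinates
  let b i := Module.finBasis 𝕜 (E i)
  have hexpand : ⇑m = fun v => ∑ k : ∀ i, Fin (Module.finrank 𝕜 (E i)),
      (∏ i, (b i).coord (k i) (v i)) • m fun i => b i (k i) := by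
    funext v
    conv_lhs => rw [← funext fun i => (b i).sum_repr (v i), m.map_sum]
    exact Finset.sum_congr rfl fun k _ => m.map_smul_univ _ _
  rw [hexpand]
  refine continuous_finsetSum _ fun k _ => .smul ?_ continuous_const
  exact continuous_finsetProd _ fun i _ =>
    ((b i).coord (k i)).continuous_of_finiteDimensional.comp (continuous_apply i)

theorem MultilinearMap.hasDerivAt_comp [DecidableEq ι] (m : MultilinearMap 𝕜 E F)
    {g : ∀ i, 𝕜 → E i} {g' : ∀ i, E i} {x₀ : 𝕜} (hg : ∀ i, HasDerivAt (g i) (g' i) x₀) :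
    HasDerivAt (fun x => m fun i => g i x)
      (∑ i, m (Function.update (fun j => g j x₀) i (g' i))) x₀ := by
  let M : ContinuousMultilinearMap 𝕜 E F := ⟨m, m.continuous_of_finiteDimensional⟩
  refine (HasFDerivAt.multilinear_comp M fun i => (hg i).hasFDerivAt).hasDerivAt.congr_deriv ?_
  simp [M, ContinuousMultilinearMap.toContinuousLinearMap]

end Multilinear

namespace Matrix

variable {𝕜 : Type*} {n : Type*} [Fintype n] [DecidableEq n]

theorem det_updateRow_one [CommRing 𝕜] (i : n) (r : n → 𝕜) :
    (updateRow (1 : Matrix n n 𝕜) i r).det = r i := by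
  have hr : r = ∑ k, r k • (1 : Matrix n n 𝕜) k := by
    ext j
    simp [one_apply]
  rw [hr, det_updateRow_sum, det_one, smul_eq_mul, mul_one]
  simp [one_apply]

theorem hasDerivAt_det_of_eq_one [NontriviallyNormedField 𝕜] [CompleteSpace 𝕜]
    {M : 𝕜 → Matrix n n 𝕜} {M' : Matrix n n 𝕜} {x₀ : 𝕜}
    (hM : ∀ i, HasDerivAt (fun x => M x i) (M' i) x₀) (hM₁ : M x₀ = 1) :
    HasDerivAt (fun x => (M x).det) M'.trace x₀ := by
  refine ((detRowAlternating (R := 𝕜)).toMultilinearMap.hasDerivAt_comp hM).congr_deriv ?_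
  refine Finset.sum_congr rfl fun i _ => ?_
  rw [show (fun j => M x₀ j) = (1 : Matrix n n 𝕜) from hM₁]
  exact det_updateRow_one i (M' i)

end Matrix

theorem hasDerivAt_det_gram_of_orthonormal {E : Type*} [NormedAddCommGroup E]
    [InnerProductSpace ℝ E] {ι : Type*} [Fintype ι] [DecidableEq ι] {f : ι → ℝ → E}
    {f' : ι → E} {x₀ : ℝ} (hf : ∀ i, HasDerivAt (f i) (f' i) x₀)
    (horth : Orthonormal ℝ fun i => f i x₀) :
    HasDerivAt (fun x => (Matrix.gram ℝ fun i => f i x).det) (2 * ∑ i, ⟪f' i, f i x₀⟫) x₀ := by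
  have hrows : ∀ i, HasDerivAt (fun x => Matrix.gram ℝ (fun i => f i x) i)
      (fun j => ⟪f i x₀, f' j⟫ + ⟪f' i, f j x₀⟫) x₀ := fun i =>
    hasDerivAt_pi.2 fun j => (hf i).inner ℝ (hf j)
  refine (Matrix.hasDerivAt_det_of_eq_one hrows
    (Matrix.gram_eq_one_iff_orthonormal.2 horth)).congr_deriv ?_
  simp [Matrix.trace, Matrix.diag, Finset.mul_sum, real_inner_comm, two_mul]

/-- Let `E` be a finite-dimensional real inner product space, `ω` an
alternating `n`-linear form on `E`, `A : E → E` linear and `x₀ ∈ ℝ`. Let `f₁, …, fₙ : ℝ → E`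
be differentiable at `x₀` with `fⱼ′(x₀) = A (fⱼ x₀)` and `(f₁ x₀, …, fₙ x₀)` orthonormal.
With `ψ x = ω (f₁ x, …, fₙ x) / √(det G x)` (`G` the Gram matrix), `ψ` is differentiable at
`x₀` with
`ψ′(x₀) = ∑ⱼ ω (f₁ x₀, …, A (fⱼ x₀), …, fₙ x₀) − ω (f₁ x₀, …, fₙ x₀) ⬝ ∑ⱼ ⟪A (fⱼ x₀), fⱼ x₀⟫`. -/
theorem stmt5 (E : Type*) [NormedAddCommGroup E] [InnerProductSpace ℝ E]
    [FiniteDimensional ℝ E] (n : ℕ)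
    (ω : E [⋀^Fin n]→ₗ[ℝ] ℝ) (A : E →ₗ[ℝ] E) (x₀ : ℝ)
    (f : Fin n → ℝ → E)
    (hf : ∀ j, HasDerivAt (f j) (A (f j x₀)) x₀)
    (horth : Orthonormal ℝ fun j => f j x₀) :
    HasDerivAt
      (fun x => ω (fun j => f j x) /
        Real.sqrt (Matrix.det (Matrix.of fun i j => ⟪f i x, f j x⟫)))
      ((∑ j, ω (Function.update (fun i => f i x₀) j (A (f j x₀)))) -
        ω (fun i => f i x₀) * ∑ j, ⟪A (f j x₀), f j x₀⟫) x₀ := by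
  have hgram : (Matrix.gram ℝ fun i => f i x₀).det = 1 := by
    rw [Matrix.gram_eq_one_iff_orthonormal.2 horth, Matrix.det_one]
  have hnum := ω.toMultilinearMap.hasDerivAt_comp hf
  have hden := (hasDerivAt_det_gram_of_orthonormal hf horth).sqrt (by simp [hgram])
  refine (hnum.div hden (by simp [hgram])).congr_deriv ?_
  simp [hgram]
end

section
/- Let n ≥ 1, let d₁, …, dₙ be nonzero real numbers, and let B be a real n×n matrix with entries bᵢⱼ. Index ℝ^{2n} by Fin n ⊕ Fin n and let A be the 2n×2n block matrix A = [[0, D⁻¹], [B, 0]], where D = diag(d₁, …, dₙ). For vectors v₁, …, vₙ ∈ ℝ^{2n} define ω₁(v₁, …, vₙ) = det M with Mᵢₖ = (vₖ)_{inl i}; ω₂(v₁, …, vₙ) = Σ_{j=1}^{n} (1/dⱼ) det M⁽ʲ⁾, where M⁽ʲ⁾ replaces the j-th row of M by the coordinates (vₖ)_{inr j}; and ω₃(v₁, …, vₙ) = Σ_{1 ≤ j < k ≤ n} (2/(dⱼ dₖ)) det M⁽ʲᵏ⁾, where M⁽ʲᵏ⁾ replaces the j-th and k-th rows of M by the coordinates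 (vₖ′)_{inr j} and (vₖ′)_{inr k} respectively. Then Σ_{j=1}^{n} ω₂(v₁, …, A·vⱼ, …, vₙ) = (b₁₁/d₁ + ⋯ + bₙₙ/dₙ) · ω₁(v₁, …, vₙ) + ω₃(v₁, …, vₙ) for all v₁, …, vₙ ∈ ℝ^{2n}. -/
/-- The block matrix `A = [[0, D⁻¹], [B, 0]]` with `D = diag (d₁, …, dₙ)`, indexed by
`Fin n ⊕ Fin n`. -/
noncomputable def blockA {n : ℕ} (d : Fin n → ℝ) (B : Matrix (Fin n) (Fin n) ℝ) :
    Matrix (Fin n ⊕ Fin n) (Fin n ⊕ Fin n) ℝ :=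
  Matrix.fromBlocks 0 (Matrix.diagonal fun i => (d i)⁻¹) B 0

/-- `ω₁ (v₁, …, vₙ) = det M` where `Mᵢₖ = (vₖ)_{inl i}`. -/
noncomputable def omega1 {n : ℕ} (v : Fin n → (Fin n ⊕ Fin n → ℝ)) : ℝ :=
  Matrix.det (Matrix.of fun i k => v k (Sum.inl i))

/-- `ω₂ (v₁, …, vₙ) = ∑ⱼ (1/dⱼ) det M⁽ʲ⁾` where `M⁽ʲ⁾` replaces the `j`-th row of `M` by the
coordinates `(vₖ)_{inr j}`. -/
noncomputable def omega2 {n : ℕ} (d : Fin n → ℝ) (v : Fin n → (Fin n ⊕ Fin n → ℝ)) : ℝ :=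
  ∑ j, (d j)⁻¹ * Matrix.det (Matrix.of fun i k =>
    if i = j then v k (Sum.inr j) else v k (Sum.inl i))

/-- `ω₃ (v₁, …, vₙ) = ∑_{j < k} (2/(dⱼ dₖ)) det M⁽ʲᵏ⁾` where `M⁽ʲᵏ⁾` replaces the `j`-th and
`k`-th rows of `M` by the coordinates `(v₋)_{inr j}` and `(v₋)_{inr k}` respectively. -/
noncomputable def omega3 {n : ℕ} (d : Fin n → ℝ) (v : Fin n → (Fin n ⊕ Fin n → ℝ)) : ℝ :=
  ∑ j, ∑ k, if j < k then
    (2 / (d j * d k)) * Matrix.det (Matrix.of fun i c =>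
      if i = j then v c (Sum.inr j)
      else if i = k then v c (Sum.inr k)
      else v c (Sum.inl i))
  else 0

/-! For `s : Finset (Fin n)` let `coordMatrix v (inrOn s)` be the `n × n` matrix whose `i`-th row
holds the `inr i` coordinates of `v₁, …, vₙ` if `i ∈ s` and their `inl i` coordinates otherwise;
`ω₁, ω₂, ω₃` are weighted sums of its determinants over `|s| = 0, 1, 2`.

Replacing each column `m` of such a matrix `M` in turn by the image of `vₘ` and summing the
determinants gives the same result as replacing each row `k` in turn by the corresponding row of
the images: if `W` is the matrix of the images, both sums equal `tr (adj M · W)`. In the `j`-th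
term of `ω₂`, the row `j` becomes `∑ₚ bⱼₚ · (row p of the matrix of ω₁)`, which gives `bⱼⱼ ω₁`,
and a row `k ≠ j` becomes `dₖ⁻¹` times the `inr k` coordinates, which gives the minor of `ω₃` for
`{j, k}`; every pair `{j, k}` arises twice, once from `j` and once from `k`. -/

open Matrix Finset

namespace Matrix

variable {n R : Type*} [Fintype n] [DecidableEq n] [CommRing R]

theorem det_updateCol_eq_sum_adjugate (M : Matrix n n R) (m : n) (c : n → R) :
    (M.updateCol m c).det = ∑ k, M.adjugate m k * c k := by
  rw [← cramer_apply, cramer_eq_adjugate_mulVec]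
  rfl

theorem det_updateRow_eq_sum_adjugate (M : Matrix n n R) (k : n) (r : n → R) :
    (M.updateRow k r).det = ∑ m, r m * M.adjugate m k := by
  rw [← det_transpose, ← updateCol_transpose, det_updateCol_eq_sum_adjugate,
    ← adjugate_transpose]
  simp only [transpose_apply, mul_comm]

theorem sum_det_updateCol_eq_sum_det_updateRow (M W : Matrix n n R) :
    ∑ m, (M.updateCol m fun i => W i m).det = ∑ k, (M.updateRow k (W k)).det := by
  simp only [det_updateCol_eq_sum_adjugate, det_updateRow_eq_sum_adjugate]
  rw [sum_comm]
  simp only [mul_comm]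

end Matrix

section CoordMatrix

variable {m ι R : Type*} [DecidableEq m]

def coordMatrix (v : m → ι → R) (s : m → ι) : Matrix m m R :=
  Matrix.of fun i k => v k (s i)

theorem coordMatrix_update_vector (v : m → ι → R) (s : m → ι) (k : m) (w : ι → R) :
    coordMatrix (Function.update v k w) s = (coordMatrix v s).updateCol k (w ∘ s) := by
  ext i c
  by_cases h : c = k
  · subst h; simp [coordMatrix]
  · simp [coordMatrix, h]

theorem coordMatrix_update_index (v : m → ι → R) (s : m → ι) (i : m) (a : ι) :
    coordMatrix v (Function.update s i a) = (coordMatrix v s).updateRow i fun k => v k a := by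
  ext r c
  by_cases h : r = i
  · subst h; simp [coordMatrix]
  · simp [coordMatrix, h]

theorem sum_det_coordMatrix_update_apply [Fintype m] [CommRing R] (v : m → ι → R) (s : m → ι)
    (f : (ι → R) → ι → R) :
    ∑ k, (coordMatrix (Function.update v k (f (v k))) s).det =
      ∑ i, ((coordMatrix v s).updateRow i fun k => f (v k) (s i)).det := by
  simp only [coordMatrix_update_vector]
  exact sum_det_updateCol_eq_sum_det_updateRow _ (coordMatrix (fun k => f (v k)) s)

end CoordMatrix

theorem Finset.sum_sum_erase_eq_two_mul_sum_lt {ι R : Type*} [Fintype ι] [LinearOrder ι]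
    [NonAssocSemiring R] (g : ι → ι → R) (hg : ∀ j k, j ≠ k → g j k = g k j) :
    ∑ j, ∑ k ∈ univ.erase j, g j k = 2 * ∑ j, ∑ k, if j < k then g j k else 0 := by
  have split : ∀ j, ∑ k ∈ univ.erase j, g j k =
      ∑ k, ((if j < k then g j k else 0) + if k < j then g j k else 0) := by
    intro j
    rw [← filter_ne', sum_filter]
    refine sum_congr rfl fun k _ => ?_
    rcases lt_trichotomy j k with h | rfl | h
    · simp [h.ne', h.asymm, h]
    · simp
    · simp [h.ne, h.asymm, h]
  have swap : ∑ j, ∑ k, (if k < j then g j k else 0) = ∑ j, ∑ k, if j < k then g j k else 0 := by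
    rw [sum_comm]
    refine sum_congr rfl fun j _ => sum_congr rfl fun k _ => ?_
    split_ifs with h
    · exact hg k j h.ne'
    · rfl
  simp only [split, sum_add_distrib, swap, two_mul]

def inrOn {ι : Type*} [DecidableEq ι] (s : Finset ι) (i : ι) : ι ⊕ ι :=
  if i ∈ s then .inr i else .inl i

theorem inrOn_insert {ι : Type*} [DecidableEq ι] (s : Finset ι) (k : ι) :
    inrOn (insert k s) = Function.update (inrOn s) k (.inr k) := by
  ext1 i
  by_cases h : i = k
  · subst h; simp [inrOn]
  · simp [inrOn, h]

theorem inrOn_empty {ι : Type*} [DecidableEq ι] : inrOn (∅ : Finset ι) = .inl := by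
  ext1 i; simp [inrOn]

section Omega

variable {n : ℕ} (d : Fin n → ℝ) (B : Matrix (Fin n) (Fin n) ℝ) (v : Fin n → Fin n ⊕ Fin n → ℝ)

theorem blockA_mulVec_inl (w : Fin n ⊕ Fin n → ℝ) (i : Fin n) :
    (blockA d B *ᵥ w) (.inl i) = (d i)⁻¹ * w (.inr i) := by
  simp [blockA, mulVec, dotProduct, Fintype.sum_sum_type, diagonal_apply]

theorem blockA_mulVec_inr (w : Fin n ⊕ Fin n → ℝ) (j : Fin n) :
    (blockA d B *ᵥ w) (.inr j) = ∑ p, B j p * w (.inl p) := by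
  simp [blockA, mulVec, dotProduct, Fintype.sum_sum_type]

theorem omega1_eq : omega1 v = (coordMatrix v .inl).det := rfl

theorem omega2_eq : omega2 d v = ∑ j, (d j)⁻¹ * (coordMatrix v (inrOn {j})).det := by
  unfold omega2
  congr! with j
  ext i k
  by_cases h : i = j
  · subst h; simp [coordMatrix, inrOn]
  · simp [coordMatrix, inrOn, h]

theorem omega3_eq : omega3 d v =
    ∑ j, ∑ k, if j < k then 2 / (d j * d k) * (coordMatrix v (inrOn {j, k})).det else 0 := by
  unfold omega3
  congr! with j _ k _ _
  ext i c
  by_cases hj : i = j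
  · subst hj; simp [coordMatrix, inrOn]
  · by_cases hk : i = k
    · subst hk; simp [coordMatrix, inrOn, hj]
    · simp [coordMatrix, inrOn, hj, hk]

theorem sum_det_coordMatrix_update_blockA_mulVec (j : Fin n) :
    ∑ m, (coordMatrix (Function.update v m (blockA d B *ᵥ v m)) (inrOn {j})).det =
      B j j * omega1 v + ∑ k ∈ univ.erase j, (d k)⁻¹ * (coordMatrix v (inrOn {j, k})).det := by
  rw [sum_det_coordMatrix_update_apply, ← add_sum_erase _ _ (mem_univ j)]
  congr 1
  · have hj : inrOn {j} = Function.update Sum.inl j (.inr j) := by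
      rw [← insert_empty_eq, inrOn_insert, inrOn_empty]
    have hrow : (fun c => (blockA d B *ᵥ v c) (inrOn {j} j)) =
        ∑ p, B j p • coordMatrix v .inl p := by
      ext c
      simp [inrOn, blockA_mulVec_inr, coordMatrix]
    rw [hrow, hj, coordMatrix_update_index, updateRow_idem, det_updateRow_sum, smul_eq_mul,
      omega1_eq]
  · refine sum_congr rfl fun k hk => ?_
    have hkj : k ≠ j := ne_of_mem_erase hk
    have hrow : (fun c => (blockA d B *ᵥ v c) (inrOn {j} k)) =
        (d k)⁻¹ • fun c => v c (.inr k) := by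
      ext c
      simp [inrOn, hkj, blockA_mulVec_inl]
    rw [hrow, det_updateRow_smul, ← coordMatrix_update_index, ← inrOn_insert, pair_comm]

end Omega

theorem stmt7_general (n : ℕ) (d : Fin n → ℝ)
    (B : Matrix (Fin n) (Fin n) ℝ)
    (v : Fin n → (Fin n ⊕ Fin n → ℝ)) :
    ∑ j, omega2 d (Function.update v j ((blockA d B).mulVec (v j))) =
      (∑ i, B i i / d i) * omega1 v + omega3 d v := by
  calc ∑ m, omega2 d (Function.update v m (blockA d B *ᵥ v m))
      = ∑ j, (d j)⁻¹ * ∑ m, (coordMatrix (Function.update v m (blockA d B *ᵥ v m))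
          (inrOn {j})).det := by
        simp only [omega2_eq, mul_sum]
        exact sum_comm
    _ = (∑ i, B i i / d i) * omega1 v +
          ∑ j, ∑ k ∈ univ.erase j, (d j)⁻¹ * (d k)⁻¹ * (coordMatrix v (inrOn {j, k})).det := by
        simp only [sum_det_coordMatrix_update_blockA_mulVec, mul_add, sum_add_distrib, mul_sum,
          sum_mul, div_eq_inv_mul, mul_assoc, mul_left_comm]
    _ = (∑ i, B i i / d i) * omega1 v + omega3 d v := by
        rw [sum_sum_erase_eq_two_mul_sum_lt _ fun j k _ => by rw [pair_comm, mul_comm (d j)⁻¹],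
          omega3_eq, mul_sum]
        simp only [mul_sum, mul_ite, mul_zero, div_eq_mul_inv, mul_inv, mul_assoc]

/-- For all `v₁, …, vₙ ∈ ℝ^{2n}`,
`∑ⱼ ω₂ (v₁, …, A·vⱼ, …, vₙ) = (b₁₁/d₁ + ⋯ + bₙₙ/dₙ) ω₁ (v₁, …, vₙ) + ω₃ (v₁, …, vₙ)`. -/
theorem stmt7 (n : ℕ) (hn : 1 ≤ n) (d : Fin n → ℝ) (hd : ∀ i, d i ≠ 0)
    (B : Matrix (Fin n) (Fin n) ℝ)
    (v : Fin n → (Fin n ⊕ Fin n → ℝ)) :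
    ∑ j, omega2 d (Function.update v j ((blockA d B).mulVec (v j))) =
      (∑ i, B i i / d i) * omega1 v + omega3 d v :=
  stmt7_general n d B v
end

section
/- Let n ≥ 1, let d₁, …, dₙ > 0, D = diag(d₁, …, dₙ), and d := min{d₁, …, dₙ}. Let L > 0 and 0 < x* ≤ L, let V : ℝ → Mₙ(ℝ) be continuous on [0, L] with K = sup_{x ∈ [0, L]} ‖V(x)‖, and let Θ ∈ Mₙ(ℝ) with C = ‖Θ‖. Suppose λ ∈ ℂ and v : ℝ → ℂⁿ is twice continuously differentiable on [0, x*], not identically zero there, and satisfies D v″(x) + V(x) v(x) = λ v(x) for all x ∈ [0, x*] together with the Robin boundary condition D v′(0) = Θ v(0) and the Dirichlet condition v(x*) = 0. Then Re λ ≤ K + C²/d. -/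
/-!
Pair the equation with `v` and integrate over `[0, x*]`. Integration by parts turns
`∫ Re ⟪v, D v″⟫` into `-∫ Re ⟪v′, D v′⟫` plus the boundary term `-Re ⟪v 0, Θ v 0⟫` (the
Dirichlet end contributes nothing), so `Re λ ∫ ‖v‖² ≤ K ∫ ‖v‖² - d ∫ ‖v′‖² + C ‖v 0‖²`.
Since `v x* = 0`, `‖v 0‖² = -∫ 2 Re ⟪v, v′⟫ ≤ ∫ 2 ‖v‖ ‖v′‖`, and
`2 C ‖v‖ ‖v′‖ ≤ (C² / d) ‖v‖² + d ‖v′‖²` absorbs the gradient term.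
As `∫ ‖v‖² > 0`, this gives `Re λ ≤ K + C² / d`.
-/

open Set
open scoped InnerProductSpace

/-- A real `n × n` matrix acting on `ℂⁿ` (with its standard Hermitian inner product)
componentwise, as a continuous linear map; its norm is the operator norm. -/
noncomputable def matCLM {n : ℕ} (M : Matrix (Fin n) (Fin n) ℝ) :
    EuclideanSpace ℂ (Fin n) →L[ℂ] EuclideanSpace ℂ (Fin n) :=
  Matrix.toEuclideanCLM (𝕜 := ℂ) (M.map Complex.ofReal)

lemma matCLM_apply {n : ℕ} (M : Matrix (Fin n) (Fin n) ℝ) (w : EuclideanSpace ℂ (Fin n))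
    (i : Fin n) : matCLM M w i = ∑ j, (M i j : ℂ) * w j := rfl

lemma matCLM_diagonal_apply {n : ℕ} (d : Fin n → ℝ) (w : EuclideanSpace ℂ (Fin n)) (i : Fin n) :
    matCLM (Matrix.diagonal d) w i = d i * w i := by
  simp [matCLM_apply, Matrix.diagonal_apply, apply_ite, ite_mul]

lemma re_inner_matCLM_diagonal_self {n : ℕ} (d : Fin n → ℝ) (w : EuclideanSpace ℂ (Fin n)) :
    (⟪w, matCLM (Matrix.diagonal d) w⟫_ℂ).re = ∑ i, d i * ‖w i‖ ^ 2 := by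
  simp only [PiLp.inner_apply, matCLM_diagonal_apply, Complex.re_sum]
  refine Finset.sum_congr rfl fun i _ => ?_
  simp [← Complex.normSq_eq_norm_sq, Complex.normSq_apply]
  ring

lemma mul_norm_sq_le_re_inner_matCLM_diagonal {n : ℕ} {d : Fin n → ℝ} {c : ℝ}
    (hc : ∀ i, c ≤ d i) (w : EuclideanSpace ℂ (Fin n)) :
    c * ‖w‖ ^ 2 ≤ (⟪w, matCLM (Matrix.diagonal d) w⟫_ℂ).re := by
  rw [re_inner_matCLM_diagonal_self, EuclideanSpace.norm_sq_eq, Finset.mul_sum]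
  gcongr with i
  exact hc i

lemma continuous_matCLM {n : ℕ} : Continuous (matCLM : Matrix (Fin n) (Fin n) ℝ → _) :=
  (LinearMap.continuous_of_finiteDimensional
    (Matrix.toEuclideanCLM (𝕜 := ℂ) (n := Fin n)).toAlgEquiv.toLinearMap).comp
    (continuous_id.matrix_map Complex.continuous_ofReal)

lemma ContinuousOn.le_ciSup_of_isCompact {α : Type*} [TopologicalSpace α] {s : Set α}
    {f : α → ℝ} (hs : IsCompact s) (hf : ContinuousOn f s) {x : α} (hx : x ∈ s) :
    f x ≤ ⨆ y : s, f y :=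
  haveI := isCompact_iff_compactSpace.mp hs
  le_ciSup (isCompact_range hf.domRestrict).bddAbove ⟨x, hx⟩

lemma DifferentiableOn.hasDerivAt_derivWithin_Icc {F : Type*} [NormedAddCommGroup F]
    [NormedSpace ℝ F] {f : ℝ → F} {a b x : ℝ} (hf : DifferentiableOn ℝ f (Icc a b))
    (hx : x ∈ Ioo a b) : HasDerivAt f (derivWithin f (Icc a b) x) x :=
  (hf x (Ioo_subset_Icc_self hx)).hasDerivWithinAt.hasDerivAt (Icc_mem_nhds hx.1 hx.2)

section Inner

variable {E : Type*} [NormedAddCommGroup E] [InnerProductSpace ℂ E] {a b : ℝ}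

theorem integral_re_inner_add_inner_eq_sub (hab : a ≤ b) {u u' w w' : ℝ → E}
    (hu : ContinuousOn u (Icc a b)) (hu' : ContinuousOn u' (Icc a b))
    (hw : ContinuousOn w (Icc a b)) (hw' : ContinuousOn w' (Icc a b))
    (hdu : ∀ x ∈ Ioo a b, HasDerivAt u (u' x) x) (hdw : ∀ x ∈ Ioo a b, HasDerivAt w (w' x) x) :
    ∫ x in a..b, (⟪u x, w' x⟫_ℂ + ⟪u' x, w x⟫_ℂ).re = (⟪u b, w b⟫_ℂ).re - (⟪u a, w a⟫_ℂ).re := by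
  refine intervalIntegral.integral_eq_sub_of_hasDerivAt_of_le hab
    (f := fun x => (⟪u x, w x⟫_ℂ).re) (by fun_prop) (fun x hx => ?_)
    (ContinuousOn.intervalIntegrable_of_Icc hab (by fun_prop))
  exact Complex.reCLM.hasFDerivAt.comp_hasDerivAt x ((hdu x hx).inner ℂ (hdw x hx))

lemma re_inner_apply_self_le_opNorm_mul_sq (M : E →L[ℂ] E) (w : E) :
    (⟪w, M w⟫_ℂ).re ≤ ‖M‖ * ‖w‖ ^ 2 :=
  calc (⟪w, M w⟫_ℂ).re ≤ ‖w‖ * ‖M w‖ := re_inner_le_norm (𝕜 := ℂ) w (M w)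
    _ ≤ ‖w‖ * (‖M‖ * ‖w‖) := by gcongr; exact M.le_opNorm w
    _ = ‖M‖ * ‖w‖ ^ 2 := by ring

lemma neg_mul_re_inner_add_inner_le {d : ℝ} (hd : 0 < d) (C : ℝ) (w w' : E) :
    -(C * (⟪w, w'⟫_ℂ + ⟪w', w⟫_ℂ).re) ≤ C ^ 2 / d * ‖w‖ ^ 2 + d * ‖w'‖ ^ 2 := by
  have hsymm : (⟪w, w'⟫_ℂ + ⟪w', w⟫_ℂ).re = 2 * (⟪w, w'⟫_ℂ).re := by
    rw [← inner_conj_symm w w', Complex.add_re, Complex.conj_re]; ring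
  have hcs : |(⟪w, w'⟫_ℂ).re| ≤ ‖w‖ * ‖w'‖ :=
    (Complex.abs_re_le_norm _).trans (norm_inner_le_norm w w')
  have hCs : -(C * (⟪w, w'⟫_ℂ).re) ≤ |C| * (‖w‖ * ‖w'‖) := by
    calc -(C * (⟪w, w'⟫_ℂ).re) ≤ |C * (⟪w, w'⟫_ℂ).re| := neg_le_abs _
      _ ≤ |C| * (‖w‖ * ‖w'‖) := by rw [abs_mul]; gcongr
  have hamgm : 0 ≤ (|C| * ‖w‖ - d * ‖w'‖) ^ 2 / d := by positivity
  have hexpand : (|C| * ‖w‖ - d * ‖w'‖) ^ 2 / d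
      = C ^ 2 / d * ‖w‖ ^ 2 + d * ‖w'‖ ^ 2 - 2 * (|C| * (‖w‖ * ‖w'‖)) := by
    field_simp; linear_combination ‖w‖ ^ 2 * sq_abs C
  rw [hsymm]
  linarith

lemma mul_norm_sq_le_of_add_eq_smul {d K : ℝ} (hd : 0 < d) {D M Θ : E →L[ℂ] E}
    (hD : ∀ z, d * ‖z‖ ^ 2 ≤ (⟪z, D z⟫_ℂ).re) (hM : ‖M‖ ≤ K) {lam : ℂ} {w w' w'' : E}
    (heq : D w'' + M w = lam • w) :
    (lam.re - K - ‖Θ‖ ^ 2 / d) * ‖w‖ ^ 2 ≤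
      (⟪w, D w''⟫_ℂ + ⟪w', D w'⟫_ℂ).re + ‖Θ‖ * (⟪w, w'⟫_ℂ + ⟪w', w⟫_ℂ).re := by
  have hw'' : (⟪w, D w''⟫_ℂ).re = lam.re * ‖w‖ ^ 2 - (⟪w, M w⟫_ℂ).re := by
    rw [eq_sub_of_add_eq heq, inner_sub_right, inner_smul_right, Complex.sub_re,
      Complex.mul_re]
    simp [← Complex.ofReal_pow]
  have hMw : (⟪w, M w⟫_ℂ).re ≤ K * ‖w‖ ^ 2 :=
    (re_inner_apply_self_le_opNorm_mul_sq M w).trans (by gcongr)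
  have hDw' := hD w'
  have hΘ := neg_mul_re_inner_add_inner_le hd ‖Θ‖ w w'
  rw [Complex.add_re]
  nlinarith

theorem re_le_of_robin_dirichlet {b d K : ℝ} (hb : 0 < b) (hd : 0 < d) {D Θ : E →L[ℂ] E}
    (hD : ∀ z, d * ‖z‖ ^ 2 ≤ (⟪z, D z⟫_ℂ).re) {V : ℝ → E →L[ℂ] E}
    (hVK : ∀ x ∈ Icc 0 b, ‖V x‖ ≤ K) {lam : ℂ} {v v' v'' : ℝ → E}
    (hv : ContinuousOn v (Icc 0 b)) (hv' : ContinuousOn v' (Icc 0 b))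
    (hv'' : ContinuousOn v'' (Icc 0 b))
    (hdv : ∀ x ∈ Ioo 0 b, HasDerivAt v (v' x) x) (hdv' : ∀ x ∈ Ioo 0 b, HasDerivAt v' (v'' x) x)
    (hne : ∃ x ∈ Icc 0 b, v x ≠ 0) (heq : ∀ x ∈ Icc 0 b, D (v'' x) + V x (v x) = lam • v x)
    (hRobin : D (v' 0) = Θ (v 0)) (hDir : v b = 0) :
    lam.re ≤ K + ‖Θ‖ ^ 2 / d := by
  set C := ‖Θ‖
  have hint : ∀ {f : ℝ → ℝ}, ContinuousOn f (Icc 0 b) →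
      IntervalIntegrable f MeasureTheory.volume 0 b :=
    ContinuousOn.intervalIntegrable_of_Icc hb.le
  have hDv' : ∀ x ∈ Ioo 0 b, HasDerivAt (fun t => D (v' t)) (D (v'' x)) x := fun x hx =>
    (D.restrictScalars ℝ).hasFDerivAt.comp_hasDerivAt x (hdv' x hx)
  have henergy : ∫ x in 0..b, (⟪v x, D (v'' x)⟫_ℂ + ⟪v' x, D (v' x)⟫_ℂ).re
      = -(⟪v 0, Θ (v 0)⟫_ℂ).re := by
    rw [integral_re_inner_add_inner_eq_sub hb.le hv hv' (by fun_prop) (by fun_prop) hdv hDv',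
      hDir, hRobin]
    simp
  have hnorm : ∫ x in 0..b, (⟪v x, v' x⟫_ℂ + ⟪v' x, v x⟫_ℂ).re = -‖v 0‖ ^ 2 := by
    rw [integral_re_inner_add_inner_eq_sub hb.le hv hv' hv hv' hdv hdv, hDir]
    simp [← Complex.ofReal_pow]
  have hΘ : -(⟪v 0, Θ (v 0)⟫_ℂ).re ≤ C * ‖v 0‖ ^ 2 := by
    simpa using re_inner_apply_self_le_opNorm_mul_sq (-Θ) (v 0)
  have hbound : (lam.re - K - C ^ 2 / d) * ∫ x in 0..b, ‖v x‖ ^ 2 ≤ 0 := by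
    rw [← intervalIntegral.integral_const_mul]
    calc ∫ x in 0..b, (lam.re - K - C ^ 2 / d) * ‖v x‖ ^ 2
        ≤ ∫ x in 0..b, ((⟪v x, D (v'' x)⟫_ℂ + ⟪v' x, D (v' x)⟫_ℂ).re
            + C * (⟪v x, v' x⟫_ℂ + ⟪v' x, v x⟫_ℂ).re) :=
          intervalIntegral.integral_mono_on hb.le (hint (by fun_prop)) (hint (by fun_prop))
            fun x hx => mul_norm_sq_le_of_add_eq_smul hd hD (hVK x hx) (heq x hx)
      _ = -(⟪v 0, Θ (v 0)⟫_ℂ).re - C * ‖v 0‖ ^ 2 := by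
          rw [intervalIntegral.integral_add (hint (by fun_prop)) (hint (by fun_prop)),
            intervalIntegral.integral_const_mul, henergy, hnorm]
          ring
      _ ≤ 0 := by linarith
  obtain ⟨x₀, hx₀, hvx₀⟩ := hne
  have hpos : 0 < ∫ x in 0..b, ‖v x‖ ^ 2 :=
    intervalIntegral.integral_pos hb (by fun_prop) (fun _ _ => by positivity)
      ⟨x₀, hx₀, by positivity⟩
  linarith [nonpos_of_mul_nonpos_left hbound hpos]

end Inner

theorem stmt9_general (n : ℕ) (d : Fin n → ℝ) (hd : ∀ i, 0 < d i)
    (dmin : ℝ) (hdmin : IsLeast (Set.range d) dmin)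
    (L xstar : ℝ) (hxstar : 0 < xstar) (hxL : xstar ≤ L)
    (V : ℝ → Matrix (Fin n) (Fin n) ℝ) (hV : ContinuousOn V (Set.Icc 0 L))
    (K : ℝ) (hK : K = ⨆ x : Set.Icc (0 : ℝ) L, ‖matCLM (V x)‖)
    (Θ : Matrix (Fin n) (Fin n) ℝ) (C : ℝ) (hC : C = ‖matCLM Θ‖)
    (lam : ℂ) (v : ℝ → EuclideanSpace ℂ (Fin n))
    (hreg : ContDiffOn ℝ 2 v (Set.Icc 0 xstar))
    (hne : ∃ x ∈ Set.Icc (0 : ℝ) xstar, v x ≠ 0)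
    (heq : ∀ x ∈ Set.Icc (0 : ℝ) xstar,
      matCLM (Matrix.diagonal d)
          (derivWithin (derivWithin v (Set.Icc 0 xstar)) (Set.Icc 0 xstar) x) +
        matCLM (V x) (v x) = lam • v x)
    (hRobin : matCLM (Matrix.diagonal d) (derivWithin v (Set.Icc 0 xstar) 0) =
      matCLM Θ (v 0))
    (hDir : v xstar = 0) :
    lam.re ≤ K + C ^ 2 / dmin := by
  obtain ⟨i₀, rfl⟩ := hdmin.1
  have hS : UniqueDiffOn ℝ (Icc 0 xstar) := uniqueDiffOn_Icc hxstar
  have hv' : ContDiffOn ℝ 1 (derivWithin v (Icc 0 xstar)) (Icc 0 xstar) :=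
    hreg.derivWithin hS (by norm_num)
  have hVK : ∀ x ∈ Icc 0 xstar, ‖matCLM (V x)‖ ≤ K := fun x hx =>
    hK ▸ ((continuous_norm.comp continuous_matCLM).comp_continuousOn hV).le_ciSup_of_isCompact
      isCompact_Icc ⟨hx.1, hx.2.trans hxL⟩
  subst hC
  exact re_le_of_robin_dirichlet hxstar (hd i₀)
    (mul_norm_sq_le_re_inner_matCLM_diagonal fun i => hdmin.2 ⟨i, rfl⟩) hVK
    hreg.continuousOn hv'.continuousOn (hv'.derivWithin (m := 0) hS le_rfl).continuousOn
    (fun _ hx => (hreg.differentiableOn (by norm_num)).hasDerivAt_derivWithin_Icc hx)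
    (fun _ hx => (hv'.differentiableOn one_ne_zero).hasDerivAt_derivWithin_Icc hx)
    hne heq hRobin hDir

/-- Let `d₁, …, dₙ > 0`, `D = diag (d₁, …, dₙ)`, `dmin = min {d₁, …, dₙ}`,
`0 < x* ≤ L`, `V : ℝ → Mₙ(ℝ)` continuous on `[0, L]` with `K = sup_{x ∈ [0,L]} ‖V x‖`, and
`Θ ∈ Mₙ(ℝ)` with `C = ‖Θ‖`. If `λ ∈ ℂ` and `v : ℝ → ℂⁿ` is twice continuously differentiable
on `[0, x*]`, not identically zero there, satisfies `D v″ + V v = λ v` on `[0, x*]`, the Robin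
condition `D v′(0) = Θ v(0)` and the Dirichlet condition `v x* = 0`, then
`Re λ ≤ K + C²/dmin`. -/
theorem stmt9 (n : ℕ) (hn : 1 ≤ n) (d : Fin n → ℝ) (hd : ∀ i, 0 < d i)
    (dmin : ℝ) (hdmin : IsLeast (Set.range d) dmin)
    (L xstar : ℝ) (hL : 0 < L) (hxstar : 0 < xstar) (hxL : xstar ≤ L)
    (V : ℝ → Matrix (Fin n) (Fin n) ℝ) (hV : ContinuousOn V (Set.Icc 0 L))
    (K : ℝ) (hK : K = ⨆ x : Set.Icc (0 : ℝ) L, ‖matCLM (V x)‖)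
    (Θ : Matrix (Fin n) (Fin n) ℝ) (C : ℝ) (hC : C = ‖matCLM Θ‖)
    (lam : ℂ) (v : ℝ → EuclideanSpace ℂ (Fin n))
    (hreg : ContDiffOn ℝ 2 v (Set.Icc 0 xstar))
    (hne : ∃ x ∈ Set.Icc (0 : ℝ) xstar, v x ≠ 0)
    (heq : ∀ x ∈ Set.Icc (0 : ℝ) xstar,
      matCLM (Matrix.diagonal d)
          (derivWithin (derivWithin v (Set.Icc 0 xstar)) (Set.Icc 0 xstar) x) +
        matCLM (V x) (v x) = lam • v x)
    (hRobin : matCLM (Matrix.diagonal d) (derivWithin v (Set.Icc 0 xstar) 0) =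
      matCLM Θ (v 0))
    (hDir : v xstar = 0) :
    lam.re ≤ K + C ^ 2 / dmin :=
  stmt9_general n d hd dmin hdmin L xstar hxstar hxL V hV K hK Θ C hC lam v hreg hne heq hRobin hDir
end

section
/- Let C > 0, Δ > 0, and L > 0 be real numbers satisfying e^{CL} < 1 + CΔ/2. Suppose ρ : ℝ → ℝ is differentiable on [0, L], ρ(0) = 1/2, and ρ′(x) ≥ −C ρ(x) − 1/Δ for all x ∈ [0, L]. Then ρ(x) > 0 for all x ∈ [0, L]; more precisely, e^{Cx} ρ(x) − 1/2 ≥ (1 − e^{Cx})/(CΔ) for all x ∈ [0, L]. -/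
/-!
Multiplying by the integrating factor `e^{Cx}` turns `ρ' ≥ -Cρ - 1/Δ` into
`(e^{Cx} (ρ + 1/(CΔ)))' ≥ 0`, so this function is monotone on `[0, L]`; comparing its values
at `0` and `x` gives the lower bound. Since `e^{Cx} ≤ e^{CL} < 1 + CΔ/2`, the right-hand side
`(1 - e^{Cx})/(CΔ)` exceeds `-1/2`, which forces `e^{Cx} ρ(x) > 0`.
-/

open Real Set

theorem monotoneOn_exp_mul_add_of_neg_mul_sub_le_deriv {f f' : ℝ → ℝ} {s : Set ℝ}
    (hs : Convex ℝ s) {C K : ℝ} (hC : C ≠ 0) (hf : ∀ x ∈ s, HasDerivWithinAt f (f' x) s x)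
    (hf' : ∀ x ∈ s, -C * f x - K ≤ f' x) :
    MonotoneOn (fun x => exp (C * x) * (f x + K / C)) s := by
  have hderiv : ∀ x ∈ s, HasDerivWithinAt (fun x => exp (C * x) * (f x + K / C))
      (exp (C * x) * (C * f x + K + f' x)) s x := by
    intro x hx
    have hexp : HasDerivAt (fun x => exp (C * x)) (exp (C * x) * (C * 1)) x :=
      ((hasDerivAt_id' x).const_mul C).exp
    refine (hexp.hasDerivWithinAt.mul ((hf x hx).add_const (K / C))).congr_deriv ?_
    field_simp
  refine monotoneOn_of_hasDerivWithinAt_nonneg hs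
    (fun x hx => (hderiv x hx).continuousWithinAt)
    (fun x hx => (hderiv x (interior_subset hx)).mono interior_subset)
    (fun x hx => ?_)
  have hfx := hf' x (interior_subset hx)
  have hfactor : 0 ≤ C * f x + K + f' x := by linarith
  positivity

theorem stmt10_general (C Δ L : ℝ) (hC : 0 < C) (hΔ : 0 < Δ)
    (hCL : Real.exp (C * L) < 1 + C * Δ / 2)
    (ρ : ℝ → ℝ) (hρ : DifferentiableOn ℝ ρ (Set.Icc 0 L))
    (hρ0 : ρ 0 = 1 / 2)
    (hineq : ∀ x ∈ Set.Icc (0 : ℝ) L,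
      -C * ρ x - 1 / Δ ≤ derivWithin ρ (Set.Icc 0 L) x) :
    ∀ x ∈ Set.Icc (0 : ℝ) L,
      0 < ρ x ∧ (1 - Real.exp (C * x)) / (C * Δ) ≤ Real.exp (C * x) * ρ x - 1 / 2 := by
  intro x hx
  have hmono := monotoneOn_exp_mul_add_of_neg_mul_sub_le_deriv (convex_Icc 0 L) hC.ne'
    (fun y hy => (hρ y hy).hasDerivWithinAt) hineq
  have hcompare := hmono (left_mem_Icc.mpr (hx.1.trans hx.2)) hx hx.1
  simp only [mul_zero, exp_zero, one_mul, hρ0] at hcompare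
  have hCΔ : 0 < C * Δ := mul_pos hC hΔ
  have hbound : (1 - exp (C * x)) / (C * Δ) ≤ exp (C * x) * ρ x - 1 / 2 := by
    rw [div_le_iff₀ hCΔ]
    field_simp at hcompare
    nlinarith
  have hexp_le : exp (C * x) ≤ exp (C * L) := 
    exp_le_exp.mpr (mul_le_mul_of_nonneg_left hx.2 hC.le)
  have hbound_gt : -(1 / 2) < (1 - exp (C * x)) / (C * Δ) := by
    rw [lt_div_iff₀ hCΔ]
    linarith
  refine ⟨pos_of_mul_pos_right (a := exp (C * x)) ?_ (exp_pos _).le, hbound⟩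
  linarith

/-- Let `C, Δ, L > 0` satisfy `e^{CL} < 1 + CΔ/2`. Suppose `ρ : ℝ → ℝ` is
differentiable on `[0, L]`, `ρ 0 = 1/2`, and `ρ′(x) ≥ −C ρ(x) − 1/Δ` for all `x ∈ [0, L]`.
Then `ρ(x) > 0` for all `x ∈ [0, L]`; more precisely,
`e^{Cx} ρ(x) − 1/2 ≥ (1 − e^{Cx})/(CΔ)` for all `x ∈ [0, L]`. -/
theorem stmt10 (C Δ L : ℝ) (hC : 0 < C) (hΔ : 0 < Δ) (hL : 0 < L)
    (hCL : Real.exp (C * L) < 1 + C * Δ / 2)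
    (ρ : ℝ → ℝ) (hρ : DifferentiableOn ℝ ρ (Set.Icc 0 L))
    (hρ0 : ρ 0 = 1 / 2)
    (hineq : ∀ x ∈ Set.Icc (0 : ℝ) L,
      -C * ρ x - 1 / Δ ≤ derivWithin ρ (Set.Icc 0 L) x) :
    ∀ x ∈ Set.Icc (0 : ℝ) L,
      0 < ρ x ∧ (1 - Real.exp (C * x)) / (C * Δ) ≤ Real.exp (C * x) * ρ x - 1 / 2 :=
  stmt10_general C Δ L hC hΔ hCL ρ hρ hρ0 hineq
end

section
/- Let n ≥ 1 and let B be a real n×n matrix. Let A be the real 2n×2n block matrix A = [[0, I], [B, 0]], where I is the n×n identity matrix and the index set of A is Fin n ⊕ Fin n. Then for every x ∈ ℝ, the matrix exponential of xA is the block matrix exp(xA) = [[C(x), S(x)], [B·S(x), C(x)]], where C(x) = Σ_{m=0}^{∞} (x^{2m}/(2m)!) Bᵐ and S(x) = Σ_{m=0}^{∞} (x^{2m+1}/(2m+1)!) Bᵐ, both series converging absolutely in the normed algebra of n×n real matrices. -/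
open scoped Nat

attribute [local instance] Matrix.linftyOpNormedRing Matrix.linftyOpNormedAlgebra

/-- `C(x) = ∑_{m} (x^{2m}/(2m)!) Bᵐ`, i.e. `cosh (√B x)` as an everywhere-convergent power
series in `B`. -/
noncomputable def coshMat {n : ℕ} (B : Matrix (Fin n) (Fin n) ℝ) (x : ℝ) :
    Matrix (Fin n) (Fin n) ℝ :=
  ∑' m : ℕ, (x ^ (2 * m) / (2 * m) ! : ℝ) • B ^ m

/-- `S(x) = ∑_{m} (x^{2m+1}/(2m+1)!) Bᵐ`, i.e. `B^{-1/2} sinh (√B x)` as an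
everywhere-convergent power series in `B`. -/
noncomputable def sinhMat {n : ℕ} (B : Matrix (Fin n) (Fin n) ℝ) (x : ℝ) :
    Matrix (Fin n) (Fin n) ℝ :=
  ∑' m : ℕ, (x ^ (2 * m + 1) / (2 * m + 1) ! : ℝ) • B ^ m

/-! Since `A ^ 2 = fromBlocks B 0 0 B`, the even powers of `A` are `fromBlocks (B ^ m) 0 0 (B ^ m)`
and the odd ones `fromBlocks 0 (B ^ m) (B ^ (m + 1)) 0`; splitting the exponential series of `x • A`
into even and odd terms gives the blocks `C(x)` and `S(x)`. Both series converge absolutely because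
`‖B ^ m‖ ≤ ‖B‖ ^ m` and `m! ≤ (2m)!`, so they are dominated by the exponential series of
`x ^ 2 * ‖B‖`. -/

open NormedSpace

theorem summable_pow_div_factorial_comp_of_le {f : ℕ → ℕ} (hf : ∀ m, m ≤ f m) {s : ℝ} (hs : 0 ≤ s) :
    Summable fun m => s ^ m / (f m)! :=
  (Real.summable_pow_div_factorial s).of_nonneg_of_le (fun m => by positivity) fun m =>
    div_le_div_of_nonneg_left (by positivity) (by positivity) (mod_cast Nat.factorial_le (hf m))

theorem summable_norm_smul_pow {𝕜 R : Type*} [NormedField 𝕜] [NormedRing R] [NormedSpace 𝕜 R]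
    (c : ℕ → 𝕜) (a : R) (h : Summable fun m => ‖c m‖ * ‖a‖ ^ m) :
    Summable fun m => ‖c m • a ^ m‖ := by
  refine (summable_nat_add_iff 1).mp <| (h.comp_injective (add_left_injective 1)).of_nonneg_of_le
    (fun _ => norm_nonneg _) fun m => ?_
  rw [norm_smul]
  exact mul_le_mul_of_nonneg_left (norm_pow_le' a m.succ_pos) (norm_nonneg _)

section Series

variable {R : Type*} [NormedRing R] [NormedAlgebra ℝ R] (B : R) (x : ℝ)

theorem summable_norm_coshSeries :
    Summable fun m : ℕ => ‖(x ^ (2 * m) / (2 * m) ! : ℝ) • B ^ m‖ := by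
  refine summable_norm_smul_pow _ B <| (summable_pow_div_factorial_comp_of_le
    (fun m => by omega : ∀ m, m ≤ 2 * m) (by positivity : 0 ≤ x ^ 2 * ‖B‖)).congr fun m => ?_
  rw [norm_div, norm_pow, Real.norm_eq_abs, RCLike.norm_natCast, mul_pow, ← sq_abs, ← pow_mul]
  ring

theorem summable_norm_sinhSeries :
    Summable fun m : ℕ => ‖(x ^ (2 * m + 1) / (2 * m + 1) ! : ℝ) • B ^ m‖ := by
  refine summable_norm_smul_pow _ B <| ((summable_pow_div_factorial_comp_of_le
    (fun m => by omega : ∀ m, m ≤ 2 * m + 1) (by positivity : 0 ≤ x ^ 2 * ‖B‖)).mul_left |x|).congr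
    fun m => ?_
  rw [norm_div, norm_pow, Real.norm_eq_abs, RCLike.norm_natCast, mul_pow, ← sq_abs, ← pow_mul]
  ring

end Series

theorem exp_smul_eq_of_hasSum_even_odd {𝔸 : Type*} [NormedRing 𝔸] [NormedAlgebra ℝ 𝔸]
    [CompleteSpace 𝔸] (A : 𝔸) (x : ℝ) {c s : 𝔸}
    (hc : HasSum (fun m : ℕ => (x ^ (2 * m) / (2 * m) ! : ℝ) • A ^ (2 * m)) c)
    (hs : HasSum (fun m : ℕ => (x ^ (2 * m + 1) / (2 * m + 1) ! : ℝ) • A ^ (2 * m + 1)) s) :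
    exp (x • A) = c + s := by
  have hterm : (fun k : ℕ => (k !⁻¹ : ℝ) • (x • A) ^ k) = fun k => (x ^ k / k ! : ℝ) • A ^ k := by
    ext k
    rw [smul_pow, smul_smul, div_eq_inv_mul]
  have hexp := exp_series_hasSum_exp' (𝕂 := ℝ) (x • A)
  rw [hterm] at hexp
  exact hexp.unique (HasSum.even_add_odd (f := fun k : ℕ => (x ^ k / k ! : ℝ) • A ^ k) hc hs)

theorem HasSum.matrix_fromBlocks {β l m n o R : Type*} [AddCommMonoid R] [TopologicalSpace R]
    {f : β → Matrix n l R} {g : β → Matrix n m R} {h : β → Matrix o l R} {k : β → Matrix o m R}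
    {A : Matrix n l R} {B : Matrix n m R} {C : Matrix o l R} {D : Matrix o m R}
    (hf : HasSum f A) (hg : HasSum g B) (hh : HasSum h C) (hk : HasSum k D) :
    HasSum (fun b => Matrix.fromBlocks (f b) (g b) (h b) (k b)) (Matrix.fromBlocks A B C D) := by
  refine Pi.hasSum.mpr fun i => Pi.hasSum.mpr fun j => ?_
  rcases i with i | i <;> rcases j with j | j
  exacts [Pi.hasSum.mp (Pi.hasSum.mp hf i) j, Pi.hasSum.mp (Pi.hasSum.mp hg i) j,
    Pi.hasSum.mp (Pi.hasSum.mp hh i) j, Pi.hasSum.mp (Pi.hasSum.mp hk i) j]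

namespace Matrix

variable {ι R : Type*} [Fintype ι] [DecidableEq ι] [Semiring R] (B : Matrix ι ι R)

theorem fromBlocks_zero_one_pow_two_mul (m : ℕ) :
    fromBlocks 0 1 B 0 ^ (2 * m) = fromBlocks (B ^ m) 0 0 (B ^ m) := by
  have hsq : fromBlocks 0 1 B 0 ^ 2 = fromBlocks B 0 0 B := by
    simp [sq, fromBlocks_multiply]
  rw [pow_mul, hsq]
  induction m with
  | zero => simp [fromBlocks_one]
  | succ m ih => simp [pow_succ, ih, fromBlocks_multiply]

theorem fromBlocks_zero_one_pow_two_mul_add_one (m : ℕ) :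
    fromBlocks 0 1 B 0 ^ (2 * m + 1) = fromBlocks 0 (B ^ m) (B ^ (m + 1)) 0 := by
  rw [pow_succ, fromBlocks_zero_one_pow_two_mul, fromBlocks_multiply]
  simp [pow_succ]

end Matrix

open Matrix in
theorem stmt11_general (n : ℕ) (B : Matrix (Fin n) (Fin n) ℝ) (x : ℝ) :
    (Summable fun m : ℕ => ‖(x ^ (2 * m) / (2 * m) ! : ℝ) • B ^ m‖) ∧
    (Summable fun m : ℕ => ‖(x ^ (2 * m + 1) / (2 * m + 1) ! : ℝ) • B ^ m‖) ∧
    NormedSpace.exp (x • Matrix.fromBlocks 0 1 B (0 : Matrix (Fin n) (Fin n) ℝ)) =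
      Matrix.fromBlocks (coshMat B x) (sinhMat B x) (B * sinhMat B x) (coshMat B x) := by
  have hC := (summable_norm_coshSeries B x).of_norm.hasSum
  have hS := (summable_norm_sinhSeries B x).of_norm.hasSum
  refine ⟨summable_norm_coshSeries B x, summable_norm_sinhSeries B x, ?_⟩
  have hEven : HasSum (fun m : ℕ => (x ^ (2 * m) / (2 * m) ! : ℝ) • fromBlocks 0 1 B 0 ^ (2 * m))
      (fromBlocks (coshMat B x) 0 0 (coshMat B x)) := by
    simp only [fromBlocks_zero_one_pow_two_mul, fromBlocks_smul, smul_zero]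
    exact hC.matrix_fromBlocks hasSum_zero hasSum_zero hC
  have hOdd : HasSum
      (fun m : ℕ => (x ^ (2 * m + 1) / (2 * m + 1) ! : ℝ) • fromBlocks 0 1 B 0 ^ (2 * m + 1))
      (fromBlocks 0 (sinhMat B x) (B * sinhMat B x) 0) := by
    simp_rw [fromBlocks_zero_one_pow_two_mul_add_one, fromBlocks_smul, smul_zero, pow_succ' B,
      ← mul_smul_comm]
    exact hasSum_zero.matrix_fromBlocks hS (hS.mul_left B) hasSum_zero
  calc exp (x • fromBlocks 0 1 B 0)
      = fromBlocks (coshMat B x) 0 0 (coshMat B x) +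
          fromBlocks 0 (sinhMat B x) (B * sinhMat B x) 0 :=
        exp_smul_eq_of_hasSum_even_odd _ x hEven hOdd
    _ = fromBlocks (coshMat B x) (sinhMat B x) (B * sinhMat B x) (coshMat B x) := by
        simp only [fromBlocks_add, add_zero, zero_add]

/-- For the block matrix `A = [[0, I], [B, 0]]` (indexed by `Fin n ⊕ Fin n`)
and every `x ∈ ℝ`, the series defining `C(x)` and `S(x)` converge absolutely in the normed
algebra of `n × n` real matrices, and
`exp (x A) = [[C(x), S(x)], [B ⬝ S(x), C(x)]]`. -/
theorem stmt11 (n : ℕ) (hn : 1 ≤ n) (B : Matrix (Fin n) (Fin n) ℝ) (x : ℝ) :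
    (Summable fun m : ℕ => ‖(x ^ (2 * m) / (2 * m) ! : ℝ) • B ^ m‖) ∧
    (Summable fun m : ℕ => ‖(x ^ (2 * m + 1) / (2 * m + 1) ! : ℝ) • B ^ m‖) ∧
    NormedSpace.exp (x • Matrix.fromBlocks 0 1 B (0 : Matrix (Fin n) (Fin n) ℝ)) =
      Matrix.fromBlocks (coshMat B x) (sinhMat B x) (B * sinhMat B x) (coshMat B x) :=
  stmt11_general n B x
end

section
/- For β ∈ ℂ and x ∈ ℝ define s(β, x) = Σ_{m=0}^{∞} βᵐ x^{2m+1}/(2m+1)!. Let B be a 2×2 complex matrix and β₁, β₂ ∈ ℂ with tr B = β₁ + β₂ and det B = β₁ β₂. Define S(x) = Σ_{m=0}^{∞} (x^{2m+1}/(2m+1)!) Bᵐ. Then for every x ∈ ℝ, det S(x) = s(β₁, x) · s(β₂, x). -/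
open scoped Nat

/-- `s(β, x) = ∑_{m} βᵐ x^{2m+1}/(2m+1)!`. -/
noncomputable def sHyp (β : ℂ) (x : ℝ) : ℂ :=
  ∑' m : ℕ, β ^ m * (x : ℂ) ^ (2 * m + 1) / ((2 * m + 1)! : ℂ)

/-- `S(x) = ∑_{m} (x^{2m+1}/(2m+1)!) Bᵐ`. -/
noncomputable def sinhMat2 (B : Matrix (Fin 2) (Fin 2) ℂ) (x : ℝ) :
    Matrix (Fin 2) (Fin 2) ℂ :=
  ∑' m : ℕ, ((x : ℂ) ^ (2 * m + 1) / ((2 * m + 1)! : ℂ)) • B ^ m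

/-!
Both `B` and its eigenvalues `β₁, β₂` are roots of `X² - σX + p` with `σ = β₁ + β₂`,
`p = β₁β₂` (for `B` this is Cayley–Hamilton). Reducing `Xᵐ` modulo this quadratic gives
`Xᵐ ≡ aₘX + bₘ` with coefficients depending only on `σ, p`, so summing the series gives
`S(x) = u B + v` and `s(βᵢ, x) = u βᵢ + v` for the same `u, v`. Then
`det (u B + v) = u² det B + u v tr B + v² = (u β₁ + v)(u β₂ + v)`. All series converge
because `aₘ, bₘ` grow at most geometrically while the coefficients decay factorially.
-/

/-- `(aₘ, bₘ)` with `Xᵐ ≡ aₘ X + bₘ` modulo `X² - σ X + p`. -/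
def powModQuad {R : Type*} [CommRing R] (σ p : R) : ℕ → R × R
  | 0 => (0, 1)
  | m + 1 => (σ * (powModQuad σ p m).1 + (powModQuad σ p m).2, -p * (powModQuad σ p m).1)

theorem pow_eq_powModQuad {R A : Type*} [CommRing R] [Ring A] [Algebra R A] {σ p : R} {r : A}
    (hr : r ^ 2 = σ • r - p • 1) (m : ℕ) :
    r ^ m = (powModQuad σ p m).1 • r + (powModQuad σ p m).2 • 1 := by
  induction m with
  | zero => simp [powModQuad]
  | succ m ih =>
    rw [pow_succ, ih, add_mul, smul_mul_assoc, smul_mul_assoc, one_mul, ← sq, hr, powModQuad]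
    module

theorem norm_powModQuad_le {R : Type*} [SeminormedCommRing R] [NormOneClass R] (σ p : R)
    (m : ℕ) :
    ‖(powModQuad σ p m).1‖ ≤ (‖σ‖ + ‖p‖ + 1) ^ m ∧
      ‖(powModQuad σ p m).2‖ ≤ (‖σ‖ + ‖p‖ + 1) ^ m := by
  induction m with
  | zero => simp [powModQuad]
  | succ m ih =>
    obtain ⟨ha, hb⟩ := ih
    have hσ := norm_nonneg σ
    have hp := norm_nonneg p
    rw [pow_succ, powModQuad]
    constructor
    · calc ‖σ * (powModQuad σ p m).1 + (powModQuad σ p m).2‖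
          ≤ ‖σ‖ * ‖(powModQuad σ p m).1‖ + ‖(powModQuad σ p m).2‖ :=
            (norm_add_le _ _).trans (add_le_add_left (norm_mul_le _ _) _)
        _ ≤ ‖σ‖ * (‖σ‖ + ‖p‖ + 1) ^ m + (‖σ‖ + ‖p‖ + 1) ^ m := by gcongr
        _ ≤ (‖σ‖ + ‖p‖ + 1) ^ m * (‖σ‖ + ‖p‖ + 1) := by
            nlinarith [pow_nonneg (by positivity : (0 : ℝ) ≤ ‖σ‖ + ‖p‖ + 1) m]
    · calc ‖-p * (powModQuad σ p m).1‖ ≤ ‖p‖ * ‖(powModQuad σ p m).1‖ := by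
            simpa only [norm_neg] using norm_mul_le (-p) _
        _ ≤ ‖p‖ * (‖σ‖ + ‖p‖ + 1) ^ m := by gcongr
        _ ≤ (‖σ‖ + ‖p‖ + 1) ^ m * (‖σ‖ + ‖p‖ + 1) := by
            rw [mul_comm]; gcongr; linarith

theorem tsum_smul_pow_of_sq_eq {R A : Type*} [CommRing R] [TopologicalSpace R] [Ring A]
    [Algebra R A] [TopologicalSpace A] [T2Space A] [ContinuousAdd A] [ContinuousSMul R A]
    {σ p : R} {r : A} (hr : r ^ 2 = σ • r - p • 1) {c : ℕ → R}
    (ha : Summable fun m => c m * (powModQuad σ p m).1)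
    (hb : Summable fun m => c m * (powModQuad σ p m).2) :
    ∑' m, c m • r ^ m =
      (∑' m, c m * (powModQuad σ p m).1) • r + (∑' m, c m * (powModQuad σ p m).2) • 1 := by
  simp_rw [pow_eq_powModQuad hr, smul_add, smul_smul]
  rw [(ha.smul_const r).tsum_add (hb.smul_const 1), ha.tsum_smul_const, hb.tsum_smul_const]

noncomputable def sinhCoeff (x : ℝ) (m : ℕ) : ℂ :=
  (x : ℂ) ^ (2 * m + 1) / ((2 * m + 1)! : ℂ)

theorem summable_sinhCoeff_mul (x : ℝ) {K : ℝ} {f : ℕ → ℂ} (hf : ∀ m, ‖f m‖ ≤ K ^ m) :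
    Summable fun m => sinhCoeff x m * f m := by
  refine .of_norm_bounded ((Real.summable_pow_div_factorial (x ^ 2 * K)).mul_left |x|) fun m => ?_
  have hfact : (m ! : ℝ) ≤ (2 * m + 1)! := by exact_mod_cast Nat.factorial_le (by omega)
  calc ‖sinhCoeff x m * f m‖ = |x| ^ (2 * m + 1) / (2 * m + 1)! * ‖f m‖ := by
        simp [sinhCoeff]
    _ ≤ |x| ^ (2 * m + 1) / m ! * K ^ m := by
        gcongr
        exact hf m
    _ = |x| * ((x ^ 2 * K) ^ m / m !) := by
        rw [pow_succ, pow_mul, sq_abs, mul_pow]; ring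

theorem Matrix.sq_fin_two {R : Type*} [CommRing R] (B : Matrix (Fin 2) (Fin 2) R) :
    B ^ 2 = B.trace • B - B.det • 1 := by
  nontriviality R
  have h := B.aeval_self_charpoly
  rw [Matrix.charpoly_fin_two] at h
  simp only [map_add, Polynomial.aeval_sub, map_pow, Polynomial.aeval_X, map_mul,
    Polynomial.aeval_C, Algebra.algebraMap_eq_smul_one, Algebra.smul_mul_assoc, one_mul] at h
  rw [← sub_eq_zero, ← h]
  abel

theorem Matrix.det_fin_two_smul_add_smul_one {R : Type*} [CommRing R]
    (B : Matrix (Fin 2) (Fin 2) R) (u v : R) :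
    (u • B + v • 1).det = u ^ 2 * B.det + u * v * B.trace + v ^ 2 := by
  simp [Matrix.det_fin_two, Matrix.trace_fin_two]
  ring

theorem sHyp_eq_tsum (β : ℂ) (x : ℝ) : sHyp β x = ∑' m, sinhCoeff x m • β ^ m := by
  simp only [sHyp, sinhCoeff, smul_eq_mul]
  congr 1 with m
  ring

theorem sinhMat2_eq_tsum (B : Matrix (Fin 2) (Fin 2) ℂ) (x : ℝ) :
    sinhMat2 B x = ∑' m, sinhCoeff x m • B ^ m :=
  rfl

/-- Let `B` be a `2 × 2` complex matrix with eigenvalues `β₁, β₂` (i.e.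
`tr B = β₁ + β₂` and `det B = β₁ β₂`). Then for every `x ∈ ℝ`,
`det S(x) = s(β₁, x) · s(β₂, x)`. -/
theorem stmt13 (B : Matrix (Fin 2) (Fin 2) ℂ) (β₁ β₂ : ℂ)
    (htr : B.trace = β₁ + β₂) (hdet : B.det = β₁ * β₂) (x : ℝ) :
    (sinhMat2 B x).det = sHyp β₁ x * sHyp β₂ x := by
  have hβ₁ : β₁ ^ 2 = (β₁ + β₂) • β₁ - (β₁ * β₂) • (1 : ℂ) := by simp only [smul_eq_mul]; ring
  have hβ₂ : β₂ ^ 2 = (β₁ + β₂) • β₂ - (β₁ * β₂) • (1 : ℂ) := by simp only [smul_eq_mul]; ring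
  have hB : B ^ 2 = (β₁ + β₂) • B - (β₁ * β₂) • 1 := htr ▸ hdet ▸ B.sq_fin_two
  have ha := summable_sinhCoeff_mul x fun m => (norm_powModQuad_le (β₁ + β₂) (β₁ * β₂) m).1
  have hb := summable_sinhCoeff_mul x fun m => (norm_powModQuad_le (β₁ + β₂) (β₁ * β₂) m).2
  rw [sinhMat2_eq_tsum, sHyp_eq_tsum, sHyp_eq_tsum, tsum_smul_pow_of_sq_eq hB ha hb,
    tsum_smul_pow_of_sq_eq hβ₁ ha hb, tsum_smul_pow_of_sq_eq hβ₂ ha hb]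
  rw [Matrix.det_fin_two_smul_add_smul_one, htr, hdet]
  simp only [smul_eq_mul, mul_one]
  ring
end

section
/- For β ∈ ℂ and x ∈ ℝ define s(β, x) = Σ_{m=0}^{∞} βᵐ x^{2m+1}/(2m+1)! and c(β, x) = Σ_{m=0}^{∞} βᵐ x^{2m}/(2m)!. Let B be a 2×2 complex matrix and β₁, β₂ ∈ ℂ with tr B = β₁ + β₂ and det B = β₁ β₂. Define S(x) = Σ_{m=0}^{∞} (x^{2m+1}/(2m+1)!) Bᵐ and C(x) = Σ_{m=0}^{∞} (x^{2m}/(2m)!) Bᵐ. Then for every x ∈ ℝ, det(S(x) + C(x)) − det S(x) − det C(x) = s(β₁, x) c(β₂, x) + s(β₂, x) c(β₁, x). -/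
open scoped Nat

/-- `c(β, x) = ∑_{m} βᵐ x^{2m}/(2m)!`. -/
noncomputable def cHyp (β : ℂ) (x : ℝ) : ℂ :=
  ∑' m : ℕ, β ^ m * (x : ℂ) ^ (2 * m) / ((2 * m)! : ℂ)

/-- `C(x) = ∑_{m} (x^{2m}/(2m)!) Bᵐ`. -/
noncomputable def coshMat2 (B : Matrix (Fin 2) (Fin 2) ℂ) (x : ℝ) :
    Matrix (Fin 2) (Fin 2) ℂ :=
  ∑' m : ℕ, ((x : ℂ) ^ (2 * m) / ((2 * m)! : ℂ)) • B ^ m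

/-! For `2 × 2` matrices, `det (S + C) - det S - det C = tr S * tr C - tr (S * C)`, and `S`, `C`
and `S * C` are absolutely convergent power series in `B`. By Cayley–Hamilton
`tr (B ^ m) = β₁ ^ m + β₂ ^ m`, so the trace of a power series `f (B)` is `f (β₁) + f (β₂)`;
for `S * C` this is applied to the Cauchy product. The right side becomes
`(s₁ + s₂) (c₁ + c₂) - (s₁ c₁ + s₂ c₂)`. -/

theorem HasSum.matrix_trace {ι n R : Type*} [Fintype n] [AddCommMonoid R] [TopologicalSpace R]
    [ContinuousAdd R] {f : ι → Matrix n n R} {M : Matrix n n R} (hf : HasSum f M) :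
    HasSum (fun i => (f i).trace) M.trace :=
  hf.map (Matrix.traceAddMonoidHom n R) continuous_id.matrix_trace

theorem Matrix.trace_pow_fin_two {R : Type*} [CommRing R] (B : Matrix (Fin 2) (Fin 2) R)
    {β₁ β₂ : R} (htr : B.trace = β₁ + β₂) (hdet : B.det = β₁ * β₂) (m : ℕ) :
    (B ^ m).trace = β₁ ^ m + β₂ ^ m := by
  induction m using Nat.twoStepInduction with
  | zero => simp [Matrix.trace_one, one_add_one_eq_two]
  | one => simpa using htr
  | more k ih₀ ih₁ =>
    rw [pow_add, Matrix.sq_fin_two, mul_sub, Matrix.trace_sub, mul_smul_comm, mul_smul_comm,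
      Matrix.trace_smul, Matrix.trace_smul, mul_one, ← pow_succ, ih₀, ih₁, htr, hdet,
      smul_eq_mul, smul_eq_mul]
    ring

theorem Matrix.det_add_sub_det_sub_det_fin_two {R : Type*} [CommRing R]
    (S C : Matrix (Fin 2) (Fin 2) R) :
    (S + C).det - S.det - C.det = S.trace * C.trace - (S * C).trace := by
  simp only [Matrix.det_fin_two, Matrix.trace_fin_two, Matrix.add_apply, Matrix.mul_apply,
    Fin.sum_univ_two]
  ring

noncomputable def powSeries {A : Type*} [Ring A] [Module ℂ A] [TopologicalSpace A]
    (a : ℕ → ℂ) (y : A) : A :=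
  ∑' m, a m • y ^ m

def HasInfiniteRadius (a : ℕ → ℂ) : Prop :=
  ∀ r : NNReal, Summable fun m => ‖a m‖ * (r : ℝ) ^ m

theorem hasInfiniteRadius_pow_div_factorial {e : ℕ → ℕ} (he : StrictMono e) (z : ℂ) :
    HasInfiniteRadius fun m => z ^ e m / (e m)! := by
  intro r
  have hexp :=
    (Real.summable_pow_div_factorial ((1 + ‖z‖) * (1 + r))).comp_injective he.injective
  refine hexp.of_nonneg_of_le (fun _ => by positivity) fun m => ?_
  rw [norm_div, norm_pow, Complex.norm_natCast, div_mul_eq_mul_div, Function.comp_apply, mul_pow]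
  gcongr
  · linarith
  · calc (r : ℝ) ^ m ≤ (1 + r) ^ m := by gcongr; linarith
      _ ≤ (1 + r) ^ e m := pow_le_pow_right₀ (by linarith [r.2]) (he.id_le m)

namespace HasInfiniteRadius

variable {A : Type*} [NormedRing A] [NormedAlgebra ℂ A] [NormOneClass A] {a b : ℕ → ℂ}

theorem summable_norm_smul_pow (ha : HasInfiniteRadius a) (y : A) :
    Summable fun m => ‖a m • y ^ m‖ :=
  (ha ‖y‖₊).of_nonneg_of_le (fun _ => norm_nonneg _) fun m =>
    (norm_smul_le _ _).trans (by gcongr; exact norm_pow_le y m)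

theorem hasSum_powSeries [CompleteSpace A] (ha : HasInfiniteRadius a) (y : A) :
    HasSum (fun m => a m • y ^ m) (powSeries a y) :=
  (ha.summable_norm_smul_pow y).of_norm.hasSum

theorem hasSum_powSeries_mul [CompleteSpace A] (ha : HasInfiniteRadius a)
    (hb : HasInfiniteRadius b) (y : A) :
    HasSum (fun p : ℕ × ℕ => (a p.1 * b p.2) • y ^ (p.1 + p.2))
      (powSeries a y * powSeries b y) := by
  have hprod := (summable_mul_of_summable_norm (ha.summable_norm_smul_pow y)
    (hb.summable_norm_smul_pow y)).hasSum
  rw [← tsum_mul_tsum_of_summable_norm (ha.summable_norm_smul_pow y)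
    (hb.summable_norm_smul_pow y)] at hprod
  simpa only [powSeries, smul_mul_smul_comm, ← pow_add] using hprod

end HasInfiniteRadius

theorem Matrix.hasSum_trace_smul_pow {ι n : Type*} [Fintype n] [DecidableEq n]
    {B : Matrix n n ℂ} {β₁ β₂ : ℂ} {c : ι → ℂ} {k : ι → ℕ} {M : Matrix n n ℂ}
    (hM : HasSum (fun i => c i • B ^ k i) M) (hpow : ∀ m, (B ^ m).trace = β₁ ^ m + β₂ ^ m) :
    HasSum (fun i => c i • β₁ ^ k i + c i • β₂ ^ k i) M.trace := by
  simpa only [Matrix.trace_smul, hpow, smul_add] using hM.matrix_trace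

section MatrixTrace

attribute [local instance] Matrix.linftyOpNormedAddCommGroup Matrix.linftyOpNormedRing
  Matrix.linftyOpNormedAlgebra

variable {n : Type*} [Fintype n] [DecidableEq n] {B : Matrix n n ℂ} {β₁ β₂ : ℂ}
  {a b : ℕ → ℂ}

theorem Matrix.trace_powSeries [Nonempty n] (ha : HasInfiniteRadius a)
    (hpow : ∀ m, (B ^ m).trace = β₁ ^ m + β₂ ^ m) :
    (powSeries a B).trace = powSeries a β₁ + powSeries a β₂ :=
  (hasSum_trace_smul_pow (ha.hasSum_powSeries B) hpow).unique
    ((ha.hasSum_powSeries β₁).add (ha.hasSum_powSeries β₂))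

theorem Matrix.trace_powSeries_mul [Nonempty n] (ha : HasInfiniteRadius a)
    (hb : HasInfiniteRadius b)
    (hpow : ∀ m, (B ^ m).trace = β₁ ^ m + β₂ ^ m) :
    (powSeries a B * powSeries b B).trace =
      powSeries a β₁ * powSeries b β₁ + powSeries a β₂ * powSeries b β₂ :=
  (hasSum_trace_smul_pow (ha.hasSum_powSeries_mul hb B) hpow).unique
    ((ha.hasSum_powSeries_mul hb β₁).add (ha.hasSum_powSeries_mul hb β₂))

end MatrixTrace

theorem sHyp_eq_powSeries (β : ℂ) (x : ℝ) :
    sHyp β x = powSeries (fun m => (x : ℂ) ^ (2 * m + 1) / ((2 * m + 1)! : ℂ)) β :=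
  tsum_congr fun m => by rw [smul_eq_mul]; ring

theorem cHyp_eq_powSeries (β : ℂ) (x : ℝ) :
    cHyp β x = powSeries (fun m => (x : ℂ) ^ (2 * m) / ((2 * m)! : ℂ)) β :=
  tsum_congr fun m => by rw [smul_eq_mul]; ring

/-- Let `B` be a `2 × 2` complex matrix with eigenvalues `β₁, β₂` (i.e.
`tr B = β₁ + β₂` and `det B = β₁ β₂`). Then for every `x ∈ ℝ`,
`det (S(x) + C(x)) − det S(x) − det C(x) = s(β₁,x) c(β₂,x) + s(β₂,x) c(β₁,x)`. -/
theorem stmt14 (B : Matrix (Fin 2) (Fin 2) ℂ) (β₁ β₂ : ℂ)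
    (htr : B.trace = β₁ + β₂) (hdet : B.det = β₁ * β₂) (x : ℝ) :
    (sinhMat2 B x + coshMat2 B x).det - (sinhMat2 B x).det - (coshMat2 B x).det =
      sHyp β₁ x * cHyp β₂ x + sHyp β₂ x * cHyp β₁ x := by
  have hpow := B.trace_pow_fin_two htr hdet
  have hs := hasInfiniteRadius_pow_div_factorial (e := fun m => 2 * m + 1)
    (fun _ _ h => by dsimp; omega) x
  have hc := hasInfiniteRadius_pow_div_factorial (e := fun m => 2 * m)
    (fun _ _ h => by dsimp; omega) x
  have hS : sinhMat2 B x = powSeries _ B := rfl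
  have hC : coshMat2 B x = powSeries _ B := rfl
  rw [Matrix.det_add_sub_det_sub_det_fin_two, hS, hC, Matrix.trace_powSeries hs hpow,
    Matrix.trace_powSeries hc hpow, Matrix.trace_powSeries_mul hs hc hpow, sHyp_eq_powSeries,
    sHyp_eq_powSeries, cHyp_eq_powSeries, cHyp_eq_powSeries]
  ring
end

section
/- Let A = (a_{ij}) be a 2×2 real matrix with det A > 0 and tr A < 0, let d > 0, and set D = diag(1, d) and B(λ) = D⁻¹(λI − A) for λ ∈ ℝ. Assume a₂₂ + d·a₁₁ < 2√(d · det A). Then for every λ ≥ 0, every real eigenvalue of B(λ) is positive; that is, for every λ ≥ 0 and every β ∈ ℝ with det(B(λ) − βI) = 0, one has β > 0. -/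
/-- Let `A` be a `2 × 2` real matrix with `det A > 0` and `tr A < 0`, let
`d > 0`, `D = diag (1, d)` and `B(λ) = D⁻¹ (λ I − A)`. If `a₂₂ + d a₁₁ < 2 √(d det A)`, then
for every `λ ≥ 0`, every real eigenvalue of `B(λ)` is positive. -/
theorem stmt15 (A : Matrix (Fin 2) (Fin 2) ℝ) (hdet : 0 < A.det) (htr : A.trace < 0)
    (d : ℝ) (hd : 0 < d)
    (hcond : A 1 1 + d * A 0 0 < 2 * Real.sqrt (d * A.det)) :
    ∀ lam : ℝ, 0 ≤ lam → ∀ β : ℝ,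
      ((Matrix.diagonal ![1, d])⁻¹ * (lam • (1 : Matrix (Fin 2) (Fin 2) ℝ) - A) -
          β • (1 : Matrix (Fin 2) (Fin 2) ℝ)).det = 0 →
      0 < β := by
  intro lam hlam β h
  have hD : (Matrix.diagonal ![1, d])⁻¹ = Matrix.diagonal ![1, d⁻¹] := by
    apply Matrix.inv_eq_right_inv
    rw [Matrix.diagonal_mul_diagonal]
    ext i j
    fin_cases i <;> fin_cases j <;>
      simp [Matrix.diagonal, Matrix.one_apply, hd.ne']
  rw [hD] at h
  simp [Matrix.det_fin_two, Matrix.mul_apply, Fin.sum_univ_two, Matrix.diagonal,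
    Matrix.one_apply] at h
  set s : ℝ := Real.sqrt (d * A.det) with hs
  have hs0 : 0 ≤ s := Real.sqrt_nonneg _
  have hssq : s ^ 2 = d * (A 0 0 * A 1 1 - A 0 1 * A 1 0) := by
    rw [hs, Real.sq_sqrt (by positivity), Matrix.det_fin_two]
  rw [Matrix.det_fin_two] at hdet
  rw [Matrix.trace_fin_two] at htr
  -- clear the d⁻¹ from the determinant equation
  have h' : (lam - A 0 0 - β) * (lam - A 1 1 - d * β) - A 0 1 * A 1 0 = 0 := by
    have := congrArg (fun x => d * x) h
    field_simp at this
    nlinarith [this]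
  by_contra hβ
  push_neg at hβ
  rcases eq_or_lt_of_le hβ with hβ0 | hβ0
  · subst hβ0
    nlinarith [mul_nonneg hlam (neg_nonneg.2 htr.le), sq_nonneg lam]
  · nlinarith [sq_nonneg (d * β + s), mul_pos (mul_pos hd (neg_pos.2 hβ0))
      (sub_pos.2 hcond), mul_nonneg (mul_nonneg (mul_nonneg hd.le hlam)
      (neg_nonneg.2 hβ)) (by linarith : (0:ℝ) ≤ 1 + d),
      mul_nonneg (mul_nonneg hd.le hlam) (neg_nonneg.2 htr.le),
      mul_nonneg hd.le (sq_nonneg lam)]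
end

section
/- Let A = (a_{ij}) be a 2×2 real matrix with det A > 0 and tr A < 0, let d > 0, and set D = diag(1, d) and B(λ) = D⁻¹(λI − A) for λ ∈ ℝ. Assume a₂₂ + d·a₁₁ > 2√(d · det A). Then there exists λ_c > 0 such that: (i) for every λ with 0 ≤ λ < λ_c, the matrix B(λ) has two distinct real eigenvalues, both negative (i.e., there exist β₁ < β₂ < 0 with det(B(λ) − βᵢ I) = 0 for i = 1, 2, and every real eigenvalue of B(λ) equals β₁ or β₂); (ii) B(λ_c) has a unique real eigenvalue, which is negative and has algebraic multiplicity two; and (iii) for every λ > λ_c, every real eigenvalue of B(λ) is positive. -/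
set_option maxHeartbeats 2000000


/-- `B(λ) = D⁻¹ (λ I − A)` with `D = diag (1, d)`. -/
noncomputable def Bmat (A : Matrix (Fin 2) (Fin 2) ℝ) (d lam : ℝ) :
    Matrix (Fin 2) (Fin 2) ℝ :=
  (Matrix.diagonal ![1, d])⁻¹ * (lam • (1 : Matrix (Fin 2) (Fin 2) ℝ) - A)

lemma Bmat_eq (A : Matrix (Fin 2) (Fin 2) ℝ) {d : ℝ} (hd : d ≠ 0) (lam : ℝ) :
    Bmat A d lam = !![lam - A 0 0, -A 0 1; -(A 1 0)/d, (lam - A 1 1)/d] := by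
  have hD : IsUnit (Matrix.diagonal ![1, d]).det := by
    simp [Matrix.det_diagonal, Fin.prod_univ_two, isUnit_iff_ne_zero, hd]
  have h1 : Matrix.diagonal ![1, d] * !![lam - A 0 0, -A 0 1; -(A 1 0)/d, (lam - A 1 1)/d]
      = lam • (1 : Matrix (Fin 2) (Fin 2) ℝ) - A := by
    ext i j
    fin_cases i <;> fin_cases j <;>
      simp [Matrix.mul_apply, Fin.sum_univ_two, Matrix.one_apply] <;> field_simp <;> ring
  rw [Bmat, ← h1, ← Matrix.mul_assoc, Matrix.nonsing_inv_mul _ hD, Matrix.one_mul]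

lemma Bmat_det (A : Matrix (Fin 2) (Fin 2) ℝ) {d : ℝ} (hd : d ≠ 0) (lam β : ℝ) :
    (Bmat A d lam - β • (1 : Matrix (Fin 2) (Fin 2) ℝ)).det =
      ((lam - A 0 0 - β) * (lam - A 1 1 - d * β) - A 0 1 * A 1 0) / d := by
  rw [Bmat_eq A hd lam, Matrix.det_fin_two]
  simp [Matrix.sub_apply, Matrix.one_apply]
  field_simp
  ring


/-- Let `A` be a `2 × 2` real matrix with `det A > 0`, `tr A < 0`, `d > 0`,
and `a₂₂ + d a₁₁ > 2 √(d det A)`. Then there exists `λ_c > 0` such that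
(i) for `0 ≤ λ < λ_c`, `B(λ)` has two distinct real eigenvalues, both negative, and every real
eigenvalue equals one of them; (ii) `B(λ_c)` has a unique real eigenvalue, negative, of
algebraic multiplicity two (its characteristic polynomial is `(t − β)²`); and (iii) for
`λ > λ_c`, every real eigenvalue of `B(λ)` is positive. -/
theorem stmt16 (A : Matrix (Fin 2) (Fin 2) ℝ) (hdet : 0 < A.det) (htr : A.trace < 0)
    (d : ℝ) (hd : 0 < d)
    (hcond : 2 * Real.sqrt (d * A.det) < A 1 1 + d * A 0 0) :
    ∃ lamc : ℝ, 0 < lamc ∧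
      (∀ lam : ℝ, 0 ≤ lam → lam < lamc →
        ∃ β₁ β₂ : ℝ, β₁ < β₂ ∧ β₂ < 0 ∧
          (Bmat A d lam - β₁ • (1 : Matrix (Fin 2) (Fin 2) ℝ)).det = 0 ∧
          (Bmat A d lam - β₂ • (1 : Matrix (Fin 2) (Fin 2) ℝ)).det = 0 ∧
          (∀ β : ℝ, (Bmat A d lam - β • (1 : Matrix (Fin 2) (Fin 2) ℝ)).det = 0 →
            β = β₁ ∨ β = β₂)) ∧
      (∃ β : ℝ, β < 0 ∧ ∀ t : ℝ,
        (t • (1 : Matrix (Fin 2) (Fin 2) ℝ) - Bmat A d lamc).det = (t - β) ^ 2) ∧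
      (∀ lam : ℝ, lamc < lam → ∀ β : ℝ,
        (Bmat A d lam - β • (1 : Matrix (Fin 2) (Fin 2) ℝ)).det = 0 → 0 < β) := by

  have hd0 : d ≠ 0 := ne_of_gt hd
  set a := A 0 0 with ha
  set b := A 0 1 with hb
  set c := A 1 0 with hc
  set e := A 1 1 with he
  have hdet2 : A.det = a * e - b * c := by rw [Matrix.det_fin_two]
  have htr2 : A.trace = a + e := by rw [Matrix.trace_fin_two]
  rw [hdet2] at hdet
  rw [htr2] at htr
  have hsqrt_nonneg : (0:ℝ) ≤ 2 * Real.sqrt (d * A.det) := by positivity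
  have hp : 0 < d * a + e := by
    have := lt_of_le_of_lt hsqrt_nonneg hcond; linarith
  have hpsq : 4 * d * (a * e - b * c) < (d * a + e) ^ 2 := by
    have hs : (2 * Real.sqrt (d * A.det)) ^ 2 = 4 * (d * (a * e - b * c)) := by
      rw [mul_pow, Real.sq_sqrt (by rw [hdet2]; positivity), hdet2]; ring
    nlinarith [hcond, hsqrt_nonneg]
  have hd1 : d ≠ 1 := by intro h; rw [h] at hp; linarith
  have hk : d - 1 ≠ 0 := sub_ne_zero.mpr hd1
  have hk2 : 0 < (d - 1) ^ 2 := by positivity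
  obtain ⟨lam0, hl0pos, hl0⟩ : ∃ L : ℝ, 0 < L ∧ (d + 1) * L = d * a + e :=
    ⟨(d * a + e) / (d + 1), div_pos hp (by linarith), by field_simp⟩
  -- f(lam0) < 0
  have hq0lam0 : 0 < lam0 ^ 2 - (a + e) * lam0 + (a * e - b * c) := by nlinarith
  have hiden : ∀ x : ℝ, ((d-1) * x - (d*a - e)) ^ 2 + 4*d*(b*c)
      = ((d+1)*x - (d*a+e))^2 - 4*d*(x^2 - (a+e)*x + (a*e - b*c)) := by intro x; ring
  have hfl0 : ((d-1) * lam0 - (d*a - e)) ^ 2 + 4*d*(b*c) < 0 := by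
    rw [hiden lam0]
    have hz : (d+1)*lam0 - (d*a+e) = 0 := by linarith
    rw [hz]
    nlinarith [mul_pos hd hq0lam0]
  have hbc : b * c < 0 := by nlinarith [sq_nonneg ((d-1) * lam0 - (d*a - e))]
  -- roots of the discriminant
  obtain ⟨lamc, r2, hlr, hfac⟩ : ∃ L R : ℝ, L < R ∧ ∀ x : ℝ,
      ((d-1) * x - (d*a - e)) ^ 2 + 4*d*(b*c) = (d-1)^2 * ((x - L) * (x - R)) := by
    set m := Real.sqrt (-(4 * d * (b * c))) with hmdef
    have hm2 : m ^ 2 = -(4 * d * (b * c)) := Real.sq_sqrt (by nlinarith)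
    have hmpos : 0 < m := Real.sqrt_pos.mpr (by nlinarith)
    have hKpos : 0 < |d - 1| := abs_pos.mpr hk
    refine ⟨(d*a-e)/(d-1) - m/|d-1|, (d*a-e)/(d-1) + m/|d-1|, by
      have : 0 < m / |d-1| := div_pos hmpos hKpos
      linarith, fun x => ?_⟩
    have expand : (d-1)^2 * ((x - ((d*a-e)/(d-1) - m/|d-1|)) * (x - ((d*a-e)/(d-1) + m/|d-1|)))
        = ((d-1) * (x - (d*a-e)/(d-1)))^2 - ((d-1) * (m/|d-1|))^2 := by ring
    have e1 : (d-1) * (x - (d*a-e)/(d-1)) = (d-1)*x - (d*a-e) := by field_simp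
    have e2 : ((d-1) * (m/|d-1|))^2 = m^2 := by
      rw [mul_pow, div_pow, sq_abs]; field_simp
    rw [expand, e1, e2, hm2]
    ring
  -- position of lam0 between the roots
  have hP : (lam0 - lamc) * (lam0 - r2) < 0 := by
    by_contra h
    push_neg at h
    have h2 : 0 ≤ (d-1)^2 * ((lam0 - lamc) * (lam0 - r2)) := mul_nonneg hk2.le h
    linarith [hfac lam0, hfl0]
  have hcl0 : lamc < lam0 := by
    by_contra h
    push_neg at h
    have h2 : 0 ≤ (lamc - lam0) * (r2 - lam0) :=
      mul_nonneg (by linarith) (by linarith)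
    linarith
  have hl0r2 : lam0 < r2 := by
    by_contra h
    push_neg at h
    have h2 : 0 ≤ (lam0 - lamc) * (lam0 - r2) :=
      mul_nonneg (by linarith) (by linarith)
    linarith
  -- lamc > 0
  have hf0 : 0 < ((d-1) * 0 - (d*a - e)) ^ 2 + 4*d*(b*c) := by linarith [hpsq]
  have hr2pos : 0 < r2 := lt_trans hl0pos hl0r2
  have hlamcpos : 0 < lamc := by
    by_contra hcon
    push_neg at hcon
    have h2 : 0 ≤ (0 - lamc) * (r2 - 0) := mul_nonneg (by linarith) (by linarith)
    linarith [mul_nonneg hk2.le h2, hfac 0, hf0]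
  have h2d : (0:ℝ) < 2*d := by linarith
  have h4d : (4*d : ℝ) ≠ 0 := by positivity
  refine ⟨lamc, hlamcpos, ?_, ?_, ?_⟩
  · -- part (i)
    intro lam h0 hlam
    have hq0 : 0 < lam ^ 2 - (a+e)*lam + (a*e - b*c) := by
      linarith [mul_nonneg (show (0:ℝ) ≤ -(a+e) by linarith) h0, sq_nonneg lam]
    have hfpos : 0 < ((d-1)*lam - (d*a-e))^2 + 4*d*(b*c) := by
      rw [hfac lam]
      have h1 : 0 < lamc - lam := by linarith
      have h2 : 0 < r2 - lam := by linarith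
      linarith [mul_pos (mul_pos hk2 h1) h2]
    have hfpos' : 0 < ((d+1)*lam - (d*a+e))^2 - 4*d*(lam^2 - (a+e)*lam + (a*e-b*c)) := by
      rw [← hiden lam]; exact hfpos
    have hs' : (d+1)*lam - (d*a+e) < 0 := by
      have h1 : lam < lam0 := lt_trans hlam hcl0
      have h2 := mul_pos (show (0:ℝ) < d+1 by linarith) (show 0 < lam0 - lam by linarith)
      linarith [hl0, h2]
    obtain ⟨r, hrpos, hr2'⟩ : ∃ r : ℝ, 0 < r ∧
        r^2 = ((d+1)*lam - (d*a+e))^2 - 4*d*(lam^2 - (a+e)*lam + (a*e-b*c)) :=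
      ⟨Real.sqrt _, Real.sqrt_pos.mpr hfpos', Real.sq_sqrt hfpos'.le⟩
    have hrlt : r < -((d+1)*lam - (d*a+e)) := by
      nlinarith [hr2', mul_pos hd hq0, hrpos, hs']
    refine ⟨(((d+1)*lam - (d*a+e)) - r)/(2*d), (((d+1)*lam - (d*a+e)) + r)/(2*d),
      ?_, ?_, ?_, ?_, ?_⟩
    · rw [div_lt_div_iff₀ h2d h2d]; nlinarith [hrpos, h2d]
    · exact div_neg_of_neg_of_pos (by linarith) h2d
    · rw [Bmat_det A hd0, ← ha, ← hb, ← hc, ← he, div_eq_zero_iff]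
      left
      have hexp : ((lam - a - (((d+1)*lam - (d*a+e)) - r)/(2*d)) *
          (lam - e - d*((((d+1)*lam - (d*a+e)) - r)/(2*d))) - b*c) * (4*d)
          = r^2 - (((d+1)*lam - (d*a+e))^2 - 4*d*(lam^2 - (a+e)*lam + (a*e-b*c))) := by
        field_simp
        ring
      have hz : ((lam - a - (((d+1)*lam - (d*a+e)) - r)/(2*d)) *
          (lam - e - d*((((d+1)*lam - (d*a+e)) - r)/(2*d))) - b*c) * (4*d) = 0 := by
        rw [hexp, hr2']; ring
      exact (mul_eq_zero.mp hz).resolve_right h4d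
    · rw [Bmat_det A hd0, ← ha, ← hb, ← hc, ← he, div_eq_zero_iff]
      left
      have hexp : ((lam - a - (((d+1)*lam - (d*a+e)) + r)/(2*d)) *
          (lam - e - d*((((d+1)*lam - (d*a+e)) + r)/(2*d))) - b*c) * (4*d)
          = r^2 - (((d+1)*lam - (d*a+e))^2 - 4*d*(lam^2 - (a+e)*lam + (a*e-b*c))) := by
        field_simp
        ring
      have hz : ((lam - a - (((d+1)*lam - (d*a+e)) + r)/(2*d)) *
          (lam - e - d*((((d+1)*lam - (d*a+e)) + r)/(2*d))) - b*c) * (4*d) = 0 := by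
        rw [hexp, hr2']; ring
      exact (mul_eq_zero.mp hz).resolve_right h4d
    · intro β hβ
      rw [Bmat_det A hd0, ← ha, ← hb, ← hc, ← he, div_eq_zero_iff] at hβ
      have hnum : (lam - a - β)*(lam - e - d*β) - b*c = 0 := hβ.resolve_right hd0
      have hexp2 : 4*d*d*((β - (((d+1)*lam - (d*a+e)) - r)/(2*d)) *
          (β - (((d+1)*lam - (d*a+e)) + r)/(2*d)))
          = 4*d*((lam - a - β)*(lam - e - d*β) - b*c)
            - (r^2 - (((d+1)*lam - (d*a+e))^2 - 4*d*(lam^2 - (a+e)*lam + (a*e-b*c)))) := by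
        field_simp
        ring
      have hz : 4*d*d*((β - (((d+1)*lam - (d*a+e)) - r)/(2*d)) *
          (β - (((d+1)*lam - (d*a+e)) + r)/(2*d))) = 0 := by
        rw [hexp2, hnum, hr2']; ring
      have h4dd : (4*d*d : ℝ) ≠ 0 := by positivity
      have hprod := (mul_eq_zero.mp hz).resolve_left h4dd
      rcases mul_eq_zero.mp hprod with h | h
      · left; have := sub_eq_zero.mp h; linarith
      · right; have := sub_eq_zero.mp h; linarith
  · -- part (ii)
    have hflc : ((d-1)*lamc - (d*a-e))^2 + 4*d*(b*c) = 0 := by rw [hfac lamc]; ring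
    have hzc : ((d+1)*lamc - (d*a+e))^2 - 4*d*(lamc^2 - (a+e)*lamc + (a*e-b*c)) = 0 := by
      rw [← hiden lamc]; exact hflc
    have hSc : (d+1)*lamc - (d*a+e) < 0 := by
      have h2 := mul_pos (show (0:ℝ) < d+1 by linarith) (show 0 < lam0 - lamc by linarith)
      linarith [hl0, h2]
    refine ⟨((d+1)*lamc - (d*a+e))/(2*d), div_neg_of_neg_of_pos hSc h2d, fun t => ?_⟩
    have hneg : (t • (1 : Matrix (Fin 2) (Fin 2) ℝ) - Bmat A d lamc)
        = -(Bmat A d lamc - t • (1 : Matrix (Fin 2) (Fin 2) ℝ)) := (neg_sub _ _).symm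
    rw [hneg, Matrix.det_neg, Bmat_det A hd0, ← ha, ← hb, ← hc, ← he]
    norm_num [Fintype.card_fin]
    rw [div_eq_iff hd0]
    refine mul_right_cancel₀ h4d ?_
    have hexp3 : ((lamc - a - t)*(lamc - e - d*t) - b*c) * (4*d)
        = (t - ((d+1)*lamc - (d*a+e))/(2*d))^2 * d * (4*d)
          - (((d+1)*lamc - (d*a+e))^2 - 4*d*(lamc^2 - (a+e)*lamc + (a*e-b*c))) := by
      field_simp
      ring
    rw [hexp3, hzc]; ring
  · -- part (iii)
    intro lam hlam β hβ
    rw [Bmat_det A hd0, ← ha, ← hb, ← hc, ← he, div_eq_zero_iff] at hβ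
    have hnum : (lam - a - β)*(lam - e - d*β) - b*c = 0 := hβ.resolve_right hd0
    have hsq : (2*d*β - ((d+1)*lam - (d*a+e)))^2
        = ((d-1)*lam - (d*a-e))^2 + 4*d*(b*c) := by linear_combination (4*d)*hnum
    have hfge : 0 ≤ ((d-1)*lam - (d*a-e))^2 + 4*d*(b*c) := hsq ▸ sq_nonneg _
    have hger2 : r2 ≤ lam := by
      by_contra h
      push_neg at h
      have h1 : 0 < (lam - lamc)*(r2 - lam) := mul_pos (by linarith) (by linarith)
      linarith [mul_pos hk2 h1, hfac lam, hfge]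
    have hS : 0 < (d+1)*lam - (d*a+e) := by
      have h1 : lam0 < lam := lt_of_lt_of_le hl0r2 hger2
      have h2 := mul_pos (show (0:ℝ) < d+1 by linarith) (show 0 < lam - lam0 by linarith)
      linarith [hl0, h2]
    have hlampos : 0 < lam := lt_trans hlamcpos hlam
    have hq0 : 0 < lam^2 - (a+e)*lam + (a*e-b*c) := by
      linarith [mul_pos (show (0:ℝ) < -(a+e) by linarith) hlampos, sq_nonneg lam]
    by_contra hcon
    push_neg at hcon
    have hnum' : d*β^2 - ((d+1)*lam - (d*a+e))*β
        + (lam^2 - (a+e)*lam + (a*e-b*c)) = 0 := by linear_combination hnum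
    linarith [mul_nonneg hS.le (neg_nonneg.mpr hcon), mul_nonneg hd.le (sq_nonneg β), hq0,
      hnum']
end

section
/- The set {A ∈ M₂(ℝ) : tr A ≠ 0 or det A < 0}, i.e. the complement in the space of 2×2 real matrices of the closed set {A : tr A = 0 and det A ≥ 0}, equipped with the subspace topology from M₂(ℝ) ≅ ℝ⁴, is homeomorphic to ℝ × (ℝ³ \ {0}). -/
/-!
Write `A = (t/2) I + w J + S` with `t = tr A`, `J` the rotation generator and `S` traceless
symmetric, encoded as `z ∈ ℂ` (the Euclidean plane). Then `det A = t²/4 + w² - |z|²`, so the set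
is `{t ≠ 0 ∨ |w| < |z|}`: for each `w`, the space `ℝ × ℂ` minus the closed disk
`{t = 0, |z| ≤ |w|}`. The map `s ↦ s (s + |t| + |w|) / (s + |t|)` is an increasing bijection from
the radii `s` with `(t, s) ≠ 0` onto the radii `ρ` with `t ≠ 0 ∨ |w| < ρ`. Rescaling `z` radially
by its inverse, the nonnegative root of a quadratic and so continuous in all variables, collapses
the disk to the origin, continuously in `w`.
-/

noncomputable def shrinkRadius (a r ρ : ℝ) : ℝ :=
  (ρ - a - r + √((ρ - a - r) ^ 2 + 4 * ρ * a)) / 2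

noncomputable def stretchFactor (a r s : ℝ) : ℝ := (s + a + r) / (s + a)

section Scalar

variable {a r ρ s : ℝ}

lemma abs_le_sqrt_discr (ha : 0 ≤ a) (hρ : 0 ≤ ρ) :
    |ρ - a - r| ≤ √((ρ - a - r) ^ 2 + 4 * ρ * a) :=
  Real.abs_le_sqrt (by nlinarith)

lemma shrinkRadius_nonneg (ha : 0 ≤ a) (hρ : 0 ≤ ρ) : 0 ≤ shrinkRadius a r ρ := by
  have := abs_le_sqrt_discr (r := r) ha hρ
  have := neg_abs_le (ρ - a - r)
  unfold shrinkRadius; linarith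

lemma sub_le_shrinkRadius (ha : 0 ≤ a) (hρ : 0 ≤ ρ) : ρ - a - r ≤ shrinkRadius a r ρ := by
  have := abs_le_sqrt_discr (r := r) ha hρ
  have := le_abs_self (ρ - a - r)
  unfold shrinkRadius; linarith

lemma shrinkRadius_mul (ha : 0 ≤ a) (hρ : 0 ≤ ρ) :
    shrinkRadius a r ρ * (shrinkRadius a r ρ + a + r) = ρ * (shrinkRadius a r ρ + a) := by
  have := Real.sq_sqrt (show 0 ≤ (ρ - a - r) ^ 2 + 4 * ρ * a by nlinarith)
  unfold shrinkRadius; linear_combination this / 4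

lemma shrinkRadius_eq (hs : 0 ≤ s) (hρ : ρ ≤ s + a + r)
    (h : s * (s + a + r) = ρ * (s + a)) : shrinkRadius a r ρ = s := by
  have hdiscr : (ρ - a - r) ^ 2 + 4 * ρ * a = (2 * s - (ρ - a - r)) ^ 2 := by
    linear_combination -4 * h
  rw [shrinkRadius, hdiscr, Real.sqrt_sq (by linarith)]; ring

lemma shrinkRadius_add_pos (ha : 0 ≤ a) (hρ : 0 ≤ ρ) (h : 0 < a ∨ r < ρ) :
    0 < shrinkRadius a r ρ + a := by
  have := shrinkRadius_nonneg (r := r) ha hρ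
  have := sub_le_shrinkRadius (r := r) ha hρ
  rcases h with h | h <;> linarith

lemma stretchFactor_pos (hr : 0 ≤ r) (h : 0 < s + a) : 0 < stretchFactor a r s :=
  div_pos (by linarith) h

lemma stretchFactor_mul_shrinkRadius (ha : 0 ≤ a) (hρ : 0 ≤ ρ)
    (h : 0 < shrinkRadius a r ρ + a) :
    stretchFactor a r (shrinkRadius a r ρ) * shrinkRadius a r ρ = ρ := by
  rw [stretchFactor, div_mul_eq_mul_div, div_eq_iff h.ne', mul_comm, shrinkRadius_mul ha hρ]

lemma shrinkRadius_stretchFactor_mul (ha : 0 ≤ a) (hr : 0 ≤ r) (hs : 0 ≤ s) (h : 0 < s + a) :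
    shrinkRadius a r (stretchFactor a r s * s) = s := by
  refine shrinkRadius_eq hs ?_ ?_
  · rw [stretchFactor, div_mul_eq_mul_div, div_le_iff₀ h]
    nlinarith
  · rw [stretchFactor]; field_simp

@[fun_prop]
lemma Continuous.shrinkRadius {X : Type*} [TopologicalSpace X] {f g h : X → ℝ}
    (hf : Continuous f) (hg : Continuous g) (hh : Continuous h) :
    Continuous fun x => shrinkRadius (f x) (g x) (h x) := by
  unfold _root_.shrinkRadius; fun_prop

lemma Continuous.stretchFactor {X : Type*} [TopologicalSpace X] {f g h : X → ℝ}
    (hf : Continuous f) (hg : Continuous g) (hh : Continuous h) (h0 : ∀ x, h x + f x ≠ 0) :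
    Continuous fun x => stretchFactor (f x) (g x) (h x) :=
  ((hh.add hf).add hg).div (hh.add hf) h0

end Scalar

section Cone

variable (F G E : Type*) [NormedAddCommGroup F] [NormedAddCommGroup G] [NormedAddCommGroup E]

def coneComplement : Set (F × G × E) := {p | p.1 ≠ 0 ∨ ‖p.2.1‖ < ‖p.2.2‖}

variable {F G E}

lemma shrinkRadius_add_pos_of_mem {p : F × G × E} (hp : p ∈ coneComplement F G E) :
    0 < shrinkRadius ‖p.1‖ ‖p.2.1‖ ‖p.2.2‖ + ‖p.1‖ :=
  shrinkRadius_add_pos (norm_nonneg _) (norm_nonneg _) (hp.imp norm_pos_iff.2 id)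

lemma norm_snd_add_norm_fst_pos {q : F × E} (hq : q ≠ 0) : 0 < ‖q.2‖ + ‖q.1‖ := by
  by_contra! h
  have h1 : ‖q.1‖ = 0 := by linarith [norm_nonneg q.1, norm_nonneg q.2]
  have h2 : ‖q.2‖ = 0 := by linarith [norm_nonneg q.1, norm_nonneg q.2]
  exact hq (Prod.ext (norm_eq_zero.1 h1) (norm_eq_zero.1 h2))

variable [NormedSpace ℝ E]

noncomputable def coneShrink (p : F × G × E) : F × E :=
  (p.1, (stretchFactor ‖p.1‖ ‖p.2.1‖ (shrinkRadius ‖p.1‖ ‖p.2.1‖ ‖p.2.2‖))⁻¹ • p.2.2)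

noncomputable def coneStretch (w : G) (q : F × E) : F × G × E :=
  (q.1, w, stretchFactor ‖q.1‖ ‖w‖ ‖q.2‖ • q.2)

lemma norm_coneShrink_snd {p : F × G × E} (hp : p ∈ coneComplement F G E) :
    ‖(coneShrink p).2‖ = shrinkRadius ‖p.1‖ ‖p.2.1‖ ‖p.2.2‖ := by
  have hpos := shrinkRadius_add_pos_of_mem hp
  have hc := stretchFactor_pos (norm_nonneg p.2.1) hpos
  rw [coneShrink, norm_smul, Real.norm_of_nonneg (inv_nonneg.2 hc.le),
    inv_mul_eq_iff_eq_mul₀ hc.ne',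
    stretchFactor_mul_shrinkRadius (norm_nonneg _) (norm_nonneg _) hpos]

lemma coneShrink_ne_zero {p : F × G × E} (hp : p ∈ coneComplement F G E) : coneShrink p ≠ 0 := by
  have hpos := shrinkRadius_add_pos_of_mem hp
  intro h
  rw [← norm_coneShrink_snd hp, show p.1 = 0 from congrArg Prod.fst h, h] at hpos
  simp at hpos

lemma coneStretch_mem (w : G) {q : F × E} (hq : q ≠ 0) :
    coneStretch w q ∈ coneComplement F G E := by
  by_cases h : q.1 = 0
  · have hpos := norm_snd_add_norm_fst_pos hq
    rw [h, norm_zero, add_zero] at hpos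
    right
    simp only [coneStretch, h, norm_zero, norm_smul, stretchFactor, add_zero,
      Real.norm_of_nonneg (div_pos (by positivity : 0 < ‖q.2‖ + ‖w‖) hpos).le,
      div_mul_cancel₀ _ hpos.ne']
    linarith
  · exact Or.inl h

lemma coneStretch_coneShrink {p : F × G × E} (hp : p ∈ coneComplement F G E) :
    coneStretch p.2.1 (coneShrink p) = p := by
  have hc := stretchFactor_pos (norm_nonneg p.2.1) (shrinkRadius_add_pos_of_mem hp)
  simp only [coneStretch, norm_coneShrink_snd hp]
  simp only [coneShrink, smul_smul, mul_inv_cancel₀ hc.ne', one_smul]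

lemma coneShrink_coneStretch (w : G) {q : F × E} (hq : q ≠ 0) :
    coneShrink (coneStretch w q) = q := by
  have hpos := norm_snd_add_norm_fst_pos hq
  have hc := stretchFactor_pos (norm_nonneg w) hpos
  simp only [coneShrink, coneStretch, norm_smul, Real.norm_of_nonneg hc.le,
    shrinkRadius_stretchFactor_mul (norm_nonneg _) (norm_nonneg _) (norm_nonneg _) hpos,
    smul_smul, inv_mul_cancel₀ hc.ne', one_smul]

noncomputable def coneComplementHomeomorph :
    coneComplement F G E ≃ₜ G × {q : F × E // q ≠ 0} where
  toFun p := (p.1.2.1, ⟨coneShrink p.1, coneShrink_ne_zero p.2⟩)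
  invFun x := ⟨coneStretch x.1 x.2.1, coneStretch_mem x.1 x.2.2⟩
  left_inv p := Subtype.ext (coneStretch_coneShrink p.2)
  right_inv x := Prod.ext rfl (Subtype.ext (coneShrink_coneStretch x.1 x.2.2))
  continuous_toFun := by
    have hc : Continuous fun p : coneComplement F G E =>
        stretchFactor ‖p.1.1‖ ‖p.1.2.1‖ (shrinkRadius ‖p.1.1‖ ‖p.1.2.1‖ ‖p.1.2.2‖) :=
      Continuous.stretchFactor (by fun_prop) (by fun_prop) (by fun_prop)
        fun p => (shrinkRadius_add_pos_of_mem p.2).ne'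
    have hc_ne : ∀ p : coneComplement F G E,
        stretchFactor ‖p.1.1‖ ‖p.1.2.1‖ (shrinkRadius ‖p.1.1‖ ‖p.1.2.1‖ ‖p.1.2.2‖) ≠ 0 :=
      fun p => (stretchFactor_pos (norm_nonneg _) (shrinkRadius_add_pos_of_mem p.2)).ne'
    refine (continuous_snd.fst.comp continuous_subtype_val).prodMk (Continuous.subtype_mk ?_ _)
    exact (continuous_fst.comp continuous_subtype_val).prodMk ((hc.inv₀ hc_ne).smul (by fun_prop))
  continuous_invFun := by
    have hc : Continuous fun x : G × {q : F × E // q ≠ 0} =>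
        stretchFactor ‖x.2.1.1‖ ‖x.1‖ ‖x.2.1.2‖ :=
      Continuous.stretchFactor (by fun_prop) (by fun_prop) (by fun_prop)
        fun x => (norm_snd_add_norm_fst_pos x.2.2).ne'
    exact Continuous.subtype_mk (by unfold coneStretch; fun_prop) _

end Cone

section Matrix

open Matrix

noncomputable def traceSkewSymCoords : Matrix (Fin 2) (Fin 2) ℝ ≃L[ℝ] ℝ × ℝ × ℂ :=
  LinearEquiv.toContinuousLinearEquiv
    { toFun A := (A.trace, (A 0 1 - A 1 0) / 2, ⟨(A 0 0 - A 1 1) / 2, (A 0 1 + A 1 0) / 2⟩)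
      invFun p := !![p.1 / 2 + p.2.2.re, p.2.2.im + p.2.1; p.2.2.im - p.2.1, p.1 / 2 - p.2.2.re]
      map_add' A B := by
        refine Prod.ext ?_ (Prod.ext ?_ (Complex.ext ?_ ?_)) <;> simp [trace_fin_two] <;> ring
      map_smul' c A := by
        refine Prod.ext ?_ (Prod.ext ?_ (Complex.ext ?_ ?_)) <;> simp [trace_fin_two] <;> ring
      left_inv A := by ext i j; fin_cases i <;> fin_cases j <;> simp [trace_fin_two] <;> ring
      right_inv p := by ext <;> simp [trace_fin_two] }

lemma det_fin_two_eq_traceSkewSymCoords (A : Matrix (Fin 2) (Fin 2) ℝ) :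
    A.det = (traceSkewSymCoords A).1 ^ 2 / 4 + (traceSkewSymCoords A).2.1 ^ 2
      - ‖(traceSkewSymCoords A).2.2‖ ^ 2 := by
  simp [traceSkewSymCoords, det_fin_two, trace_fin_two, Complex.sq_norm, Complex.normSq_apply]
  ring

lemma trace_ne_zero_or_det_neg_iff (A : Matrix (Fin 2) (Fin 2) ℝ) :
    A.trace ≠ 0 ∨ A.det < 0 ↔ traceSkewSymCoords A ∈ coneComplement ℝ ℝ ℂ := by
  rw [det_fin_two_eq_traceSkewSymCoords, show A.trace = (traceSkewSymCoords A).1 from rfl]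
  obtain ⟨t, w, z⟩ := traceSkewSymCoords A
  by_cases ht : t = 0
  · simp [coneComplement, ht, sq_lt_sq]
  · simp [coneComplement, ht]

end Matrix

noncomputable def finThreeCoords : (Fin 3 → ℝ) ≃L[ℝ] ℝ × ℂ :=
  LinearEquiv.toContinuousLinearEquiv
    { toFun x := (x 0, ⟨x 1, x 2⟩)
      invFun q := ![q.1, q.2.re, q.2.im]
      map_add' x y := Prod.ext rfl (Complex.ext rfl rfl)
      map_smul' c x := Prod.ext rfl (by simp [Complex.ext_iff])
      left_inv x := by ext i; fin_cases i <;> simp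
      right_inv q := by ext <;> simp }

/-- The set `{A ∈ M₂(ℝ) : tr A ≠ 0 or det A < 0}` — the complement of the
closed solid double cone `{tr A = 0, det A ≥ 0}` — with the subspace topology from
`M₂(ℝ) ≅ ℝ⁴`, is homeomorphic to `ℝ × (ℝ³ \ {0})`. -/
theorem stmt19 :
    Nonempty
      ((({A : Matrix (Fin 2) (Fin 2) ℝ | A.trace ≠ 0 ∨ A.det < 0}) :
          Set (Matrix (Fin 2) (Fin 2) ℝ)) ≃ₜ
        (ℝ × {x : Fin 3 → ℝ // x ≠ 0})) :=
  ⟨(traceSkewSymCoords.toHomeomorph.subtype trace_ne_zero_or_det_neg_iff).trans <|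
    coneComplementHomeomorph.trans <| (Homeomorph.refl ℝ).prodCongr <|
      (finThreeCoords.toHomeomorph.subtype fun _ => finThreeCoords.map_ne_zero_iff.symm).symm⟩
end
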